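/- arXiv:2504.02077 — 6 statements merged into one kernel-verified Lean document; each statement's English description precedes it below -/
import Mathlib

section
/- Let v1, v2 be i.i.d. integrable nonnegative random variables. Then E[max(v1 - v2, 0)] ≥ E[max(E[v1] - v1, 0)], i.e., the exchange option on two i.i.d. assets is worth at least an at-the-money put. -/
open MeasureTheory ProbabilityTheory

theorem exchange_option_ge_atm_put
    {Ω : Type*} [MeasurableSpace Ω] (μ : Measure Ω) [IsProbabilityMeasure μ]
    (v1 v2 : Ω → ℝ)
    (h1 : Integrable v1 μ) (h2 : Integrable v2 μ)
    (hpos1 : ∀ ω, 0 ≤ v1 ω) (hpos2 : ∀ ω, 0 ≤ v2 ω)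
    (hindep : IndepFun v1 v2 μ) (hid : IdentDistrib v1 v2 μ μ) :
    ∫ ω, max ((∫ ω', v1 ω' ∂μ) - v1 ω) 0 ∂μ
      ≤ ∫ ω, max (v1 ω - v2 ω) 0 ∂μ := by
  set m := ∫ ω', v1 ω' ∂μ with hm
  set ν := μ.map v1 with hν
  have haem1 := h1.aemeasurable
  have haem2 := h2.aemeasurable
  have hν2 : μ.map v2 = ν := hid.map_eq.symm
  haveI : IsProbabilityMeasure ν := Measure.isProbabilityMeasure_map haem1
  -- identity over ν is integrable with integral m
  have hid_int : Integrable (fun x : ℝ => x) ν :=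
    (integrable_map_measure aestronglyMeasurable_id haem1).mpr h1
  have hid_eq : ∫ x, x ∂ν = m := integral_map haem1 aestronglyMeasurable_id
  -- joint law is product
  have hmap : μ.map (fun ω => (v1 ω, v2 ω)) = ν.prod ν := by
    rw [(indepFun_iff_map_prod_eq_prod_map_map haem1 haem2).mp hindep, hν2]
  -- the payoff function
  set f : ℝ × ℝ → ℝ := fun p => max (p.1 - p.2) 0 with hf
  have hf_cont : Continuous f := (continuous_fst.sub continuous_snd).max continuous_const
  have hf_int : Integrable f (ν.prod ν) := by
    rw [← hmap]
    refine (integrable_map_measure hf_cont.aestronglyMeasurable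
      (haem1.prodMk haem2)).mpr ?_
    exact (h1.sub h2).sup (integrable_zero _ _ _)
  -- RHS rewrite
  have hRHS : ∫ ω, max (v1 ω - v2 ω) 0 ∂μ = ∫ x, ∫ y, max (x - y) 0 ∂ν ∂ν := by
    have := integral_map (haem1.prodMk haem2) hf_cont.aestronglyMeasurable (f := f)
    rw [hmap] at this
    rw [← this, integral_prod f hf_int]
  -- LHS rewrite: E[(m - v1)^+] = E[(v1 - m)^+]
  have hint1 : Integrable (fun ω => max (v1 ω - m) 0) μ :=
    (h1.sub (integrable_const m)).sup (integrable_zero _ _ _)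
  have hint2 : Integrable (fun ω => v1 ω - m) μ := h1.sub (integrable_const m)
  have hLHS1 : ∫ ω, max (m - v1 ω) 0 ∂μ = ∫ ω, max (v1 ω - m) 0 ∂μ := by
    have key : ∀ ω, max (m - v1 ω) 0 = max (v1 ω - m) 0 - (v1 ω - m) := by
      intro ω; rcases le_total (v1 ω) m with h | h
      · rw [max_eq_left (by linarith), max_eq_right (by linarith)]; ring
      · rw [max_eq_right (by linarith), max_eq_left (by linarith)]; ring
    simp_rw [key]
    rw [integral_sub hint1 hint2, integral_sub h1 (integrable_const m),
      integral_const, probReal_univ]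
    simp [hm]
  have hLHS2 : ∫ ω, max (v1 ω - m) 0 ∂μ = ∫ x, max (x - m) 0 ∂ν :=
    (integral_map haem1 ((continuous_id.sub continuous_const).max
      continuous_const).aestronglyMeasurable).symm
  rw [hRHS, hLHS1, hLHS2]
  -- integrability of x ↦ max (x - m) 0 over ν
  have hgν : Integrable (fun x : ℝ => max (x - m) 0) ν :=
    (hid_int.sub (integrable_const m)).sup (integrable_zero _ _ _)
  refine integral_mono hgν hf_int.integral_prod_left (fun x => ?_)
  -- pointwise: max (x - m) 0 ≤ ∫ y, max (x - y) 0 ∂ν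
  have hix : Integrable (fun y : ℝ => max (x - y) 0) ν :=
    ((integrable_const x).sub hid_int).sup (integrable_zero _ _ _)
  have hsub : ∫ y, (x - y) ∂ν = x - m := by
    rw [integral_sub (integrable_const x) hid_int, integral_const, probReal_univ, hid_eq]
    simp
  refine max_le ?_ (integral_nonneg fun y => le_max_right _ _)
  calc x - m = ∫ y, (x - y) ∂ν := hsub.symm
    _ ≤ ∫ y, max (x - y) 0 ∂ν :=
      integral_mono ((integrable_const x).sub hid_int) hix (fun y => le_max_left _ _)
end

section
/- Let v1, v2 be i.i.d. with continuous CDF F and finite mean, and v̲ ≥ 0. Then ∫_{v̲}^∞ F(x)(1 - F(x)) dx = E[max(v1·1{v1 ≥ v̲}, v2·1{v2 ≥ v̲})] - E[v1·1{v1 ≥ v̲}] - v̲·F(v̲)(1 - F(v̲)). -/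
open MeasureTheory ProbabilityTheory
open Filter Set Topology


-- helper 1: toReal of complement
lemma probCompl_toReal {Ω : Type*} [MeasurableSpace Ω] (μ : Measure Ω) [IsProbabilityMeasure μ]
    {s : Set Ω} (hs : MeasurableSet s) : (μ sᶜ).toReal = 1 - (μ s).toReal := by
  rw [measure_compl hs (measure_ne_top μ s), measure_univ,
    ENNReal.toReal_sub_of_le prob_le_one ENNReal.one_ne_top, ENNReal.toReal_one]

-- helper 2: tail integrable
lemma tail_integrableOn {Ω : Type*} [MeasurableSpace Ω] {μ : Measure Ω} {f : Ω → ℝ}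
    (hf : Integrable f μ) (hnn : 0 ≤ᵐ[μ] f) :
    IntegrableOn (fun t => (μ {a | t < f a}).toReal) (Set.Ioi 0) := by
  have hmeas : Measurable fun t : ℝ => μ {a | t < f a} :=
    Antitone.measurable (fun s t hst => measure_mono fun a h => lt_of_le_of_lt hst h)
  refine ⟨hmeas.ennreal_toReal.aestronglyMeasurable, ?_⟩
  rw [hasFiniteIntegral_iff_norm]
  calc ∫⁻ t in Set.Ioi 0, ENNReal.ofReal ‖(μ {a | t < f a}).toReal‖
      ≤ ∫⁻ t in Set.Ioi 0, μ {a | t < f a} := by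
        refine lintegral_mono fun t => ?_
        rw [Real.norm_of_nonneg ENNReal.toReal_nonneg]
        exact ENNReal.ofReal_toReal_le
    _ = ∫⁻ ω, ENNReal.ofReal (f ω) ∂μ := (lintegral_eq_lintegral_meas_lt μ hnn hf.aemeasurable).symm
    _ < ⊤ := hf.lintegral_lt_top



lemma no_atom {Ω : Type*} [MeasurableSpace Ω] (μ : Measure Ω) [IsProbabilityMeasure μ]
    {v1 : Ω → ℝ} (hm1 : Measurable v1) (F : ℝ → ℝ)
    (hF : ∀ x, F x = (μ {ω | v1 ω ≤ x}).toReal) (hcont : Continuous F)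
    (x : ℝ) : μ {ω | v1 ω = x} = 0 := by
  have hfin : μ {ω | v1 ω = x} ≠ ⊤ := measure_ne_top _ _
  have htoReal : (μ {ω | v1 ω = x}).toReal = 0 := by
    have key : ∀ n : ℕ, (μ {ω | v1 ω = x}).toReal ≤ F x - F (x - 1/(n+1)) := by
      intro n
      have hlt : x - 1/((n:ℝ)+1) < x := by
        have : (0:ℝ) < 1/((n:ℝ)+1) := by positivity
        linarith
      have hsub : {ω | v1 ω = x} ⊆ {ω | v1 ω ≤ x} \ {ω | v1 ω ≤ x - 1/(n+1)} := by
        intro ω hω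
        simp only [Set.mem_setOf_eq] at hω
        exact ⟨le_of_eq hω, by simp only [Set.mem_setOf_eq, hω]; linarith⟩
      have hmono : {ω | v1 ω ≤ x - 1/((n:ℝ)+1)} ⊆ {ω | v1 ω ≤ x} :=
        fun ω hω => le_trans hω hlt.le
      have hdiff : μ ({ω | v1 ω ≤ x} \ {ω | v1 ω ≤ x - 1/(n+1)})
          = μ {ω | v1 ω ≤ x} - μ {ω | v1 ω ≤ x - 1/(n+1)} :=
        measure_diff hmono (hm1 measurableSet_Iic).nullMeasurableSet (measure_ne_top _ _)
      calc (μ {ω | v1 ω = x}).toReal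
          ≤ (μ ({ω | v1 ω ≤ x} \ {ω | v1 ω ≤ x - 1/(n+1)})).toReal :=
            ENNReal.toReal_mono (by rw [hdiff]; exact (tsub_le_self.trans_lt (measure_lt_top _ _)).ne) (measure_mono hsub)
        _ = F x - F (x - 1/(n+1)) := by
            rw [hdiff, ENNReal.toReal_sub_of_le (measure_mono hmono) (measure_ne_top _ _),
              hF, hF]
    have hlim : Tendsto (fun n : ℕ => F x - F (x - 1/(n+1))) atTop (𝓝 0) := by
      have h1 : Tendsto (fun n : ℕ => x - 1/((n:ℝ)+1)) atTop (𝓝 x) := by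
        have := tendsto_one_div_add_atTop_nhds_zero_nat (𝕜 := ℝ)
        have h2 := tendsto_const_nhds.sub (f := fun n : ℕ => x) this
        simpa using h2
      have h3 := ((hcont.tendsto x).comp h1)
      have h4 := tendsto_const_nhds.sub (f := fun n : ℕ => F x) h3
      simpa using h4
    exact le_antisymm (ge_of_tendsto' hlim key) ENNReal.toReal_nonneg
  exact (ENNReal.toReal_eq_zero_iff _).mp htoReal |>.resolve_right hfin

theorem aux_main
    {Ω : Type*} [MeasurableSpace Ω] (μ : Measure Ω) [IsProbabilityMeasure μ]
    (v1 v2 : Ω → ℝ) (hm1 : Measurable v1) (hm2 : Measurable v2)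
    (h1 : Integrable v1 μ) (h2 : Integrable v2 μ)
    (hpos1 : ∀ ω, 0 ≤ v1 ω) (hpos2 : ∀ ω, 0 ≤ v2 ω)
    (hindep : IndepFun v1 v2 μ) (hid : IdentDistrib v1 v2 μ μ)
    (F : ℝ → ℝ) (hF : ∀ x, F x = (μ {ω | v1 ω ≤ x}).toReal)
    (hatom : ∀ x, μ {ω | v1 ω = x} = 0)
    (u : ℝ) (hu : 0 ≤ u) :
    ∫ x in Set.Ioi u, F x * (1 - F x)
      = (∫ ω, max (if u ≤ v1 ω then v1 ω else 0) (if u ≤ v2 ω then v2 ω else 0) ∂μ)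
        - (∫ ω, (if u ≤ v1 ω then v1 ω else 0) ∂μ)
        - u * F u * (1 - F u) := by
  -- basic facts about truncations
  have hW1m : Measurable (fun ω => if u ≤ v1 ω then v1 ω else 0) :=
    Measurable.ite (measurableSet_le measurable_const hm1) hm1 measurable_const
  have hW2m : Measurable (fun ω => if u ≤ v2 ω then v2 ω else 0) :=
    Measurable.ite (measurableSet_le measurable_const hm2) hm2 measurable_const
  have hW1nn : ∀ ω, 0 ≤ (if u ≤ v1 ω then v1 ω else 0) := fun ω => by
    split
    · exact hpos1 ω
    · exact le_rfl
  have hW2nn : ∀ ω, 0 ≤ (if u ≤ v2 ω then v2 ω else 0) := fun ω => by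
    split
    · exact hpos2 ω
    · exact le_rfl
  have hW1le : ∀ ω, (if u ≤ v1 ω then v1 ω else 0) ≤ v1 ω := fun ω => by
    split
    · exact le_rfl
    · exact hpos1 ω
  have hW2le : ∀ ω, (if u ≤ v2 ω then v2 ω else 0) ≤ v2 ω := fun ω => by
    split
    · exact le_rfl
    · exact hpos2 ω
  have hW1int : Integrable (fun ω => if u ≤ v1 ω then v1 ω else 0) μ :=
    h1.mono hW1m.aestronglyMeasurable (ae_of_all _ fun ω => by
      rw [Real.norm_of_nonneg (hW1nn ω), Real.norm_of_nonneg (hpos1 ω)]; exact hW1le ω)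
  have hMm : Measurable (fun ω => max (if u ≤ v1 ω then v1 ω else 0) (if u ≤ v2 ω then v2 ω else 0)) :=
    hW1m.max hW2m
  have hMnn : ∀ ω, 0 ≤ max (if u ≤ v1 ω then v1 ω else 0) (if u ≤ v2 ω then v2 ω else 0) :=
    fun ω => le_max_of_le_left (hW1nn ω)
  have hMint : Integrable (fun ω => max (if u ≤ v1 ω then v1 ω else 0) (if u ≤ v2 ω then v2 ω else 0)) μ :=
    (h1.add h2).mono hMm.aestronglyMeasurable (ae_of_all _ fun ω => by
      simp only [Pi.add_apply]
      rw [Real.norm_of_nonneg (hMnn ω), Real.norm_of_nonneg (add_nonneg (hpos1 ω) (hpos2 ω))]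
      exact max_le ((hW1le ω).trans (le_add_of_nonneg_right (hpos2 ω)))
        ((hW2le ω).trans (le_add_of_nonneg_left (hpos1 ω))))
  -- atom facts
  have hlt_eq : μ {ω | v1 ω < u} = μ {ω | v1 ω ≤ u} := by
    refine le_antisymm (measure_mono fun ω (h : v1 ω < u) => (le_of_lt h : v1 ω ≤ u)) ?_
    calc μ {ω | v1 ω ≤ u} ≤ μ ({ω | v1 ω < u} ∪ {ω | v1 ω = u}) :=
          measure_mono (fun ω (h : v1 ω ≤ u) => (lt_or_eq_of_le h : v1 ω < u ∨ v1 ω = u))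
      _ ≤ μ {ω | v1 ω < u} + μ {ω | v1 ω = u} := measure_union_le _ _
      _ = μ {ω | v1 ω < u} := by rw [hatom u, add_zero]
  -- identical distribution facts
  have hid_le : ∀ t, μ {ω | v2 ω ≤ t} = μ {ω | v1 ω ≤ t} :=
    fun t => (hid.measure_mem_eq measurableSet_Iic).symm
  have hid_lt : μ {ω | v2 ω < u} = μ {ω | v1 ω < u} :=
    (hid.measure_mem_eq measurableSet_Iio).symm
  -- independence facts
  have hind_le : ∀ t : ℝ, μ ({ω | v1 ω ≤ t} ∩ {ω | v2 ω ≤ t})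
      = μ {ω | v1 ω ≤ t} * μ {ω | v2 ω ≤ t} :=
    fun t => hindep.measure_inter_preimage_eq_mul _ _ measurableSet_Iic measurableSet_Iic
  have hind_lt : μ ({ω | v1 ω < u} ∩ {ω | v2 ω < u})
      = μ {ω | v1 ω < u} * μ {ω | v2 ω < u} :=
    hindep.measure_inter_preimage_eq_mul _ _ measurableSet_Iio measurableSet_Iio
  have hms1_le : ∀ t : ℝ, MeasurableSet {ω | v1 ω ≤ t} := fun t => hm1 measurableSet_Iic
  have hms1_lt : ∀ t : ℝ, MeasurableSet {ω | v1 ω < t} := fun t => hm1 measurableSet_Iio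
  have hms2_le : ∀ t : ℝ, MeasurableSet {ω | v2 ω ≤ t} := fun t => hm2 measurableSet_Iic
  have hms2_lt : ∀ t : ℝ, MeasurableSet {ω | v2 ω < t} := fun t => hm2 measurableSet_Iio
  -- complement measure helper
  have probCompl : ∀ {s : Set Ω}, MeasurableSet s → (μ sᶜ).toReal = 1 - (μ s).toReal := by
    intro s hs
    rw [measure_compl hs (measure_ne_top μ s), measure_univ,
      ENNReal.toReal_sub_of_le prob_le_one ENNReal.one_ne_top, ENNReal.toReal_one]
  -- layer cake for W1 and M
  have hEW : ∫ ω, (if u ≤ v1 ω then v1 ω else 0) ∂μ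
      = ∫ t in Set.Ioi (0:ℝ), (μ {a | t < (if u ≤ v1 a then v1 a else 0)}).toReal :=
    hW1int.integral_eq_integral_meas_lt (ae_of_all _ hW1nn)
  have hEM : ∫ ω, max (if u ≤ v1 ω then v1 ω else 0) (if u ≤ v2 ω then v2 ω else 0) ∂μ
      = ∫ t in Set.Ioi (0:ℝ),
          (μ {a | t < max (if u ≤ v1 a then v1 a else 0) (if u ≤ v2 a then v2 a else 0)}).toReal :=
    hMint.integral_eq_integral_meas_lt (ae_of_all _ hMnn)
  -- tail integrability
  have hIW : IntegrableOn (fun t => (μ {a | t < (if u ≤ v1 a then v1 a else 0)}).toReal)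
      (Set.Ioi 0) := tail_integrableOn hW1int (ae_of_all _ hW1nn)
  have hIM : IntegrableOn (fun t =>
      (μ {a | t < max (if u ≤ v1 a then v1 a else 0) (if u ≤ v2 a then v2 a else 0)}).toReal)
      (Set.Ioi 0) := tail_integrableOn hMint (ae_of_all _ hMnn)
  -- split the integration domain
  have hsplit : Set.Ioc (0:ℝ) u ∪ Set.Ioi u = Set.Ioi (0:ℝ) := Set.Ioc_union_Ioi_eq_Ioi hu
  have hsub1 : Set.Ioc (0:ℝ) u ⊆ Set.Ioi (0:ℝ) := by rw [← hsplit]; exact Set.subset_union_left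
  have hsub2 : Set.Ioi u ⊆ Set.Ioi (0:ℝ) := by rw [← hsplit]; exact Set.subset_union_right
  have hsplitW : ∫ t in Set.Ioi (0:ℝ), (μ {a | t < (if u ≤ v1 a then v1 a else 0)}).toReal
      = (∫ t in Set.Ioc (0:ℝ) u, (μ {a | t < (if u ≤ v1 a then v1 a else 0)}).toReal)
        + ∫ t in Set.Ioi u, (μ {a | t < (if u ≤ v1 a then v1 a else 0)}).toReal := by
    rw [← hsplit, setIntegral_union Set.Ioc_disjoint_Ioi_same measurableSet_Ioi
      (hIW.mono_set hsub1) (hIW.mono_set hsub2)]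
  have hsplitM : ∫ t in Set.Ioi (0:ℝ),
        (μ {a | t < max (if u ≤ v1 a then v1 a else 0) (if u ≤ v2 a then v2 a else 0)}).toReal
      = (∫ t in Set.Ioc (0:ℝ) u,
          (μ {a | t < max (if u ≤ v1 a then v1 a else 0) (if u ≤ v2 a then v2 a else 0)}).toReal)
        + ∫ t in Set.Ioi u,
          (μ {a | t < max (if u ≤ v1 a then v1 a else 0) (if u ≤ v2 a then v2 a else 0)}).toReal := by
    rw [← hsplit, setIntegral_union Set.Ioc_disjoint_Ioi_same measurableSet_Ioi
      (hIM.mono_set hsub1) (hIM.mono_set hsub2)]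
  -- measures of the relevant sets near u
  have hμ_lt_compl : μ ({ω | v1 ω < u} ∩ {ω | v2 ω < u})ᶜ = μ ({ω | v1 ω ≤ u} ∩ {ω | v2 ω ≤ u})ᶜ := by
    rw [measure_compl ((hms1_lt u).inter (hms2_lt u)) (measure_ne_top _ _),
      measure_compl ((hms1_le u).inter (hms2_le u)) (measure_ne_top _ _),
      hind_lt, hind_le u, hlt_eq, hid_lt, hlt_eq, hid_le u]
  -- the Ioc piece for W1
  have hWconst : ∀ t ∈ Set.Ioc (0:ℝ) u,
      (μ {a | t < (if u ≤ v1 a then v1 a else 0)}).toReal = 1 - F u := by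
    intro t ht
    have h1sub : {ω | u < v1 ω} ⊆ {a | t < (if u ≤ v1 a then v1 a else 0)} := by
      intro ω hω
      simp only [Set.mem_setOf_eq] at hω ⊢
      rw [if_pos hω.le]
      exact lt_of_le_of_lt ht.2 hω
    have h2sub : {a | t < (if u ≤ v1 a then v1 a else 0)} ⊆ {ω | u ≤ v1 ω} := by
      intro ω hω
      simp only [Set.mem_setOf_eq] at hω ⊢
      by_contra h
      rw [if_neg h] at hω
      exact absurd hω (not_lt.mpr ht.1.le)
    have hμ1 : μ {ω | u < v1 ω} = μ {ω | v1 ω ≤ u}ᶜ := by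
      congr 1; ext ω; simp [not_le]
    have hμ2 : μ {ω | u ≤ v1 ω} = μ {ω | v1 ω ≤ u}ᶜ := by
      have he : {ω | u ≤ v1 ω} = {ω | v1 ω < u}ᶜ := by ext ω; simp [not_lt]
      rw [he, measure_compl (hms1_lt u) (measure_ne_top _ _), hlt_eq,
        measure_compl (hms1_le u) (measure_ne_top _ _)]
    have hmid : μ {a | t < (if u ≤ v1 a then v1 a else 0)} = μ {ω | v1 ω ≤ u}ᶜ :=
      le_antisymm (hμ2 ▸ measure_mono h2sub) (hμ1 ▸ measure_mono h1sub)
    rw [hmid, probCompl (hms1_le u), hF]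
  have hWIoc : ∫ t in Set.Ioc (0:ℝ) u, (μ {a | t < (if u ≤ v1 a then v1 a else 0)}).toReal
      = u * (1 - F u) := by
    rw [setIntegral_congr_fun measurableSet_Ioc hWconst, setIntegral_const, smul_eq_mul,
      Real.volume_real_Ioc, max_eq_left (by linarith : (0:ℝ) ≤ u - 0), sub_zero]
  -- the Ioi piece for W1
  have hWtail : ∀ t ∈ Set.Ioi u,
      (μ {a | t < (if u ≤ v1 a then v1 a else 0)}).toReal = 1 - F t := by
    intro t ht
    have htu : u < t := ht
    have hset : {a | t < (if u ≤ v1 a then v1 a else 0)} = {ω | v1 ω ≤ t}ᶜ := by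
      ext ω
      simp only [Set.mem_setOf_eq, Set.mem_compl_iff, not_le]
      constructor
      · intro h
        split at h
        · exact h
        · exact absurd h (not_lt.mpr (hu.trans htu.le))
      · intro h
        rw [if_pos ((htu.trans h).le)]
        exact h
    rw [hset, probCompl (hms1_le t), hF]
  have hWIoi : ∫ t in Set.Ioi u, (μ {a | t < (if u ≤ v1 a then v1 a else 0)}).toReal
      = ∫ t in Set.Ioi u, (1 - F t) :=
    setIntegral_congr_fun measurableSet_Ioi (fun t ht => hWtail t ht)
  -- the Ioc piece for M
  have hMconst : ∀ t ∈ Set.Ioc (0:ℝ) u,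
      (μ {a | t < max (if u ≤ v1 a then v1 a else 0) (if u ≤ v2 a then v2 a else 0)}).toReal
        = 1 - F u * F u := by
    intro t ht
    have hlow : ({ω | v1 ω ≤ u} ∩ {ω | v2 ω ≤ u})ᶜ
        ⊆ {a | t < max (if u ≤ v1 a then v1 a else 0) (if u ≤ v2 a then v2 a else 0)} := by
      intro ω hω
      simp only [Set.mem_compl_iff, Set.mem_inter_iff, Set.mem_setOf_eq, not_and, not_le] at hω
      simp only [Set.mem_setOf_eq, lt_max_iff]
      by_cases h : v1 ω ≤ u
      · right
        have h2 : u < v2 ω := hω h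
        rw [if_pos h2.le]
        exact lt_of_le_of_lt ht.2 h2
      · left
        push_neg at h
        rw [if_pos h.le]
        exact lt_of_le_of_lt ht.2 h
    have hupp : {a | t < max (if u ≤ v1 a then v1 a else 0) (if u ≤ v2 a then v2 a else 0)}
        ⊆ ({ω | v1 ω < u} ∩ {ω | v2 ω < u})ᶜ := by
      intro ω hω
      simp only [Set.mem_setOf_eq, lt_max_iff] at hω
      simp only [Set.mem_compl_iff, Set.mem_inter_iff, Set.mem_setOf_eq, not_and, not_lt]
      rcases hω with h | h
      · intro h1
        split at h
        · exact absurd h1 (not_lt.mpr (by assumption))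
        · exact absurd h (not_lt.mpr ht.1.le)
      · intro _
        split at h
        · assumption
        · exact absurd h (not_lt.mpr ht.1.le)
    have hmid : μ {a | t < max (if u ≤ v1 a then v1 a else 0) (if u ≤ v2 a then v2 a else 0)}
        = μ ({ω | v1 ω ≤ u} ∩ {ω | v2 ω ≤ u})ᶜ :=
      le_antisymm ((measure_mono hupp).trans_eq hμ_lt_compl) (measure_mono hlow)
    rw [hmid, probCompl ((hms1_le u).inter (hms2_le u)), hind_le u, ENNReal.toReal_mul,
      hid_le u, hF]
  have hMIoc : ∫ t in Set.Ioc (0:ℝ) u,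
      (μ {a | t < max (if u ≤ v1 a then v1 a else 0) (if u ≤ v2 a then v2 a else 0)}).toReal
        = u * (1 - F u * F u) := by
    rw [setIntegral_congr_fun measurableSet_Ioc hMconst, setIntegral_const, smul_eq_mul,
      Real.volume_real_Ioc, max_eq_left (by linarith : (0:ℝ) ≤ u - 0), sub_zero]
  -- the Ioi piece for M
  have hMtail : ∀ t ∈ Set.Ioi u,
      (μ {a | t < max (if u ≤ v1 a then v1 a else 0) (if u ≤ v2 a then v2 a else 0)}).toReal
        = 1 - F t * F t := by
    intro t ht
    have htu : u < t := ht
    have hset : {a | t < max (if u ≤ v1 a then v1 a else 0) (if u ≤ v2 a then v2 a else 0)}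
        = ({ω | v1 ω ≤ t} ∩ {ω | v2 ω ≤ t})ᶜ := by
      ext ω
      simp only [Set.mem_setOf_eq, lt_max_iff, Set.mem_compl_iff, Set.mem_inter_iff, not_and,
        not_le]
      constructor
      · rintro (h | h)
        · intro h1
          split at h
          · exact absurd h (not_lt.mpr h1)
          · exact absurd h (not_lt.mpr (hu.trans htu.le))
        · intro _
          split at h
          · exact h
          · exact absurd h (not_lt.mpr (hu.trans htu.le))
      · intro h
        by_cases h1 : v1 ω ≤ t
        · right
          have h2 := h h1
          rw [if_pos ((htu.trans h2).le)]
          exact h2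
        · left
          push_neg at h1
          rw [if_pos ((htu.trans h1).le)]
          exact h1
    rw [hset, probCompl ((hms1_le t).inter (hms2_le t)), hind_le t, ENNReal.toReal_mul,
      hid_le t, hF]
  have hMIoi : ∫ t in Set.Ioi u,
      (μ {a | t < max (if u ≤ v1 a then v1 a else 0) (if u ≤ v2 a then v2 a else 0)}).toReal
        = ∫ t in Set.Ioi u, (1 - F t * F t) :=
    setIntegral_congr_fun measurableSet_Ioi (fun t ht => hMtail t ht)
  -- integrability of the limit functions
  have hI1 : IntegrableOn (fun t => 1 - F t) (Set.Ioi u) :=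
    (hIW.mono_set (Set.Ioi_subset_Ioi hu)).congr_fun (fun t ht => hWtail t ht) measurableSet_Ioi
  have hI2 : IntegrableOn (fun t => 1 - F t * F t) (Set.Ioi u) :=
    (hIM.mono_set (Set.Ioi_subset_Ioi hu)).congr_fun (fun t ht => hMtail t ht) measurableSet_Ioi
  -- final assembly
  have hdiff : ∫ t in Set.Ioi u, ((1 - F t * F t) - (1 - F t))
      = (∫ t in Set.Ioi u, (1 - F t * F t)) - ∫ t in Set.Ioi u, (1 - F t) :=
    integral_sub hI2 hI1
  have hFF : ∫ x in Set.Ioi u, F x * (1 - F x)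
      = ∫ t in Set.Ioi u, ((1 - F t * F t) - (1 - F t)) :=
    setIntegral_congr_fun measurableSet_Ioi (fun t _ => by ring)
  rw [hEM, hEW, hsplitM, hsplitW, hMIoc, hWIoc, hMIoi, hWIoi, hFF, hdiff]
  ring

theorem truncated_exchange_term
    {Ω : Type*} [MeasurableSpace Ω] (μ : Measure Ω) [IsProbabilityMeasure μ]
    (v1 v2 : Ω → ℝ)
    (h1 : Integrable v1 μ) (h2 : Integrable v2 μ)
    (hpos1 : ∀ ω, 0 ≤ v1 ω) (hpos2 : ∀ ω, 0 ≤ v2 ω)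
    (hindep : IndepFun v1 v2 μ) (hid : IdentDistrib v1 v2 μ μ)
    (F : ℝ → ℝ) (hF : ∀ x, F x = (μ {ω | v1 ω ≤ x}).toReal)
    (hcont : Continuous F)
    (u : ℝ) (hu : 0 ≤ u) :
    ∫ x in Set.Ioi u, F x * (1 - F x)
      = (∫ ω, max (if u ≤ v1 ω then v1 ω else 0) (if u ≤ v2 ω then v2 ω else 0) ∂μ)
        - (∫ ω, (if u ≤ v1 ω then v1 ω else 0) ∂μ)
        - u * F u * (1 - F u) := by
  obtain ⟨g1, hg1, he1⟩ := h1.aestronglyMeasurable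
  obtain ⟨g2, hg2, he2⟩ := h2.aestronglyMeasurable
  set w1 : Ω → ℝ := fun ω => max (g1 ω) 0 with hw1def
  set w2 : Ω → ℝ := fun ω => max (g2 ω) 0 with hw2def
  have hw1m : Measurable w1 := hg1.measurable.max measurable_const
  have hw2m : Measurable w2 := hg2.measurable.max measurable_const
  have e1 : v1 =ᵐ[μ] w1 := by
    filter_upwards [he1] with ω hω
    rw [hw1def]
    dsimp only
    rw [← hω, max_eq_left (hpos1 ω)]
  have e2 : v2 =ᵐ[μ] w2 := by
    filter_upwards [he2] with ω hω
    rw [hw2def]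
    dsimp only
    rw [← hω, max_eq_left (hpos2 ω)]
  have hw1pos : ∀ ω, 0 ≤ w1 ω := fun ω => le_max_right _ _
  have hw2pos : ∀ ω, 0 ≤ w2 ω := fun ω => le_max_right _ _
  have hint1 : Integrable w1 μ := h1.congr e1
  have hint2 : Integrable w2 μ := h2.congr e2
  have hindep' : IndepFun w1 w2 μ := hindep.congr e1 e2
  have hid' : IdentDistrib w1 w2 μ μ :=
    ⟨hw1m.aemeasurable, hw2m.aemeasurable, by
      rw [← Measure.map_congr e1, ← Measure.map_congr e2]; exact hid.map_eq⟩
  have hF' : ∀ x, F x = (μ {ω | w1 ω ≤ x}).toReal := by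
    intro x
    rw [hF x]
    congr 1
    apply measure_congr
    filter_upwards [e1] with ω hω
    change (v1 ω ≤ x) = (w1 ω ≤ x)
    rw [hω]
  have hatom' : ∀ x, μ {ω | w1 ω = x} = 0 := fun x => no_atom μ hw1m F hF' hcont x
  have key := aux_main μ w1 w2 hw1m hw2m hint1 hint2 hw1pos hw2pos hindep' hid' F hF' hatom' u hu
  have hIntM : ∫ ω, max (if u ≤ v1 ω then v1 ω else 0) (if u ≤ v2 ω then v2 ω else 0) ∂μ
      = ∫ ω, max (if u ≤ w1 ω then w1 ω else 0) (if u ≤ w2 ω then w2 ω else 0) ∂μ :=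
    integral_congr_ae (by filter_upwards [e1, e2] with ω hω1 hω2; rw [hω1, hω2])
  have hInt1 : ∫ ω, (if u ≤ v1 ω then v1 ω else 0) ∂μ
      = ∫ ω, (if u ≤ w1 ω then w1 ω else 0) ∂μ :=
    integral_congr_ae (by filter_upwards [e1] with ω hω; rw [hω])
  rw [hIntM, hInt1]
  exact key
end

section
/- Suppose Bob bids β(v) nondecreasing in v, and Alice's mixed strategy gives her zero expected profit from every bid b_A > L in its support, where her profit from bid b_A is E[(v - b_A)·1{β(v) < b_A}]. Then every such bid satisfies b_A = E[v | v < β^{-1}(b_A)], where β^{-1}(b) = inf{v : β(v) ≥ b}. -/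
open MeasureTheory ProbabilityTheory

theorem alice_bid_characterization
    {Ω : Type*} [MeasurableSpace Ω] (μ : Measure Ω) [IsProbabilityMeasure μ]
    (v : Ω → ℝ) (hv : Integrable v μ) (hpos : ∀ ω, 0 ≤ v ω)
    (F : ℝ → ℝ) (hF : ∀ x, F x = (μ {ω | v ω ≤ x}).toReal)
    (hcont : Continuous F) (hmono : StrictMonoOn F (Set.Ioi 0))
    (β : ℝ → ℝ) (hβ : Monotone β)
    (L b : ℝ) (hb : L < b)
    (hzero : ∫ ω in {ω | β (v ω) < b}, (v ω - b) ∂μ = 0)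
    (hppos : μ {ω | v ω < sInf {x | b ≤ β x}} ≠ 0) :
    b * (μ {ω | v ω < sInf {x | b ≤ β x}}).toReal
      = ∫ ω in {ω | v ω < sInf {x | b ≤ β x}}, v ω ∂μ := by
  set s : ℝ := sInf {x | b ≤ β x} with hs
  set A : Set Ω := {ω | v ω < s} with hA
  -- A is nonempty
  have hAne : A.Nonempty := by
    rcases Set.eq_empty_or_nonempty A with h | h
    · exact absurd (h ▸ measure_empty) hppos
    · exact h
  obtain ⟨ω0, hω0⟩ := hAne
  have hspos : 0 < s := lt_of_le_of_lt (hpos ω0) hω0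
  -- the set S is nonempty and bounded below
  have hSne : {x | b ≤ β x}.Nonempty := by
    by_contra h
    rw [Set.not_nonempty_iff_eq_empty] at h
    rw [hs, h, Real.sInf_empty] at hspos
    exact lt_irrefl 0 hspos
  have hSbdd : BddBelow {x | b ≤ β x} := by
    by_contra h
    rw [hs, Real.sInf_of_not_bddBelow h] at hspos
    exact lt_irrefl 0 hspos
  -- pointwise relations between the two sets
  have hfwd : ∀ ω, v ω < s → β (v ω) < b := by
    intro ω hω
    by_contra h
    push_neg at h
    exact absurd (csInf_le hSbdd h) (not_le.mpr hω)
  have hbwd : ∀ ω, β (v ω) < b → v ω ≤ s := by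
    intro ω hω
    by_contra h
    push_neg at h
    obtain ⟨x, hx, hxlt⟩ := exists_lt_of_csInf_lt hSne h
    exact absurd (le_trans hx (hβ hxlt.le)) (not_le.mpr hω)
  -- a measurable version of v
  obtain ⟨w, hw, hvw⟩ := hv.aemeasurable
  have hset : ∀ x : ℝ, μ {ω | v ω ≤ x} = μ {ω | w ω ≤ x} := by
    intro x
    apply measure_congr
    filter_upwards [hvw] with ω h
    show (v ω ≤ x) = (w ω ≤ x)
    rw [h]
  -- {v = s} is null
  have hnull : μ {ω | v ω = s} = 0 := by
    have h1 : μ {ω | v ω = s} = μ {ω | w ω = s} := by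
      apply measure_congr
      filter_upwards [hvw] with ω h
      show (v ω = s) = (w ω = s)
      rw [h]
    rw [h1]
    set c : ℝ := (μ {ω | w ω = s}).toReal with hc
    have hkey : ∀ n : ℕ, c ≤ F s - F (s - 1 / (n + 1)) := by
      intro n
      have hsub : {ω | w ω ≤ s - 1 / (n + 1)} ⊆ {ω | w ω ≤ s} := by
        intro ω hω
        simp only [Set.mem_setOf_eq] at hω ⊢
        have : (0:ℝ) < 1 / (n + 1 : ℝ) := by positivity
        linarith
      have hdiff : μ ({ω | w ω ≤ s} \ {ω | w ω ≤ s - 1 / (n + 1)})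
          = μ {ω | w ω ≤ s} - μ {ω | w ω ≤ s - 1 / (n + 1)} := by
        exact measure_diff hsub (hw (measurableSet_Iic)).nullMeasurableSet
          (measure_ne_top μ _)
      have hmem : {ω | w ω = s} ⊆ {ω | w ω ≤ s} \ {ω | w ω ≤ s - 1 / (n + 1)} := by
        intro ω hω
        simp only [Set.mem_setOf_eq] at hω
        have h1 : (0:ℝ) < 1 / (n + 1) := by positivity
        constructor
        · simp [Set.mem_setOf_eq, hω]
        · simp only [Set.mem_setOf_eq, hω]
          intro h
          linarith
      have hle : μ {ω | w ω = s} ≤ μ ({ω | w ω ≤ s} \ {ω | w ω ≤ s - 1 / (n + 1)}) :=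
        measure_mono hmem
      have h2 : c ≤ (μ ({ω | w ω ≤ s} \ {ω | w ω ≤ s - 1 / (n + 1)})).toReal :=
        ENNReal.toReal_mono (measure_ne_top μ _) hle
      rw [hdiff, ENNReal.toReal_sub_of_le (measure_mono hsub) (measure_ne_top μ _)] at h2
      rw [hF s, hF (s - 1 / (n + 1)), hset s, hset (s - 1 / (n + 1))]
      exact h2
    have htend : Filter.Tendsto (fun n : ℕ => F s - F (s - 1 / (n + 1)))
        Filter.atTop (nhds 0) := by
      have h1 : Filter.Tendsto (fun n : ℕ => s - 1 / (n + 1)) Filter.atTop (nhds s) := by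
        have := tendsto_one_div_add_atTop_nhds_zero_nat (𝕜 := ℝ)
        have h2 := Filter.Tendsto.sub (tendsto_const_nhds (x := s)) this
        simpa using h2
      have h2 := (hcont.tendsto s).comp h1
      have h3 := Filter.Tendsto.sub (tendsto_const_nhds (x := F s)) h2
      simpa using h3
    have hc0 : c ≤ 0 := le_of_tendsto_of_tendsto tendsto_const_nhds htend
      (Filter.Eventually.of_forall hkey)
    have hcnn : 0 ≤ c := ENNReal.toReal_nonneg
    have : c = 0 := le_antisymm hc0 hcnn
    rw [hc, ENNReal.toReal_eq_zero_iff] at this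
    rcases this with h | h
    · exact h
    · exact absurd h (measure_ne_top μ _)
  -- the two sets are a.e. equal
  have haeeq : {ω | β (v ω) < b} =ᵐ[μ] A := by
    rw [Filter.eventuallyEq_set]
    have : ∀ᵐ ω ∂μ, v ω ≠ s := by
      rw [MeasureTheory.ae_iff]
      simpa using hnull
    filter_upwards [this] with ω hωne
    constructor
    · intro h
      exact lt_of_le_of_ne (hbwd ω h) hωne
    · intro h
      exact hfwd ω h
  -- rewrite hzero over A
  have hzeroA : ∫ ω in A, (v ω - b) ∂μ = 0 := by
    rw [← setIntegral_congr_set haeeq]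
    exact hzero
  have hint : IntegrableOn v A μ := hv.integrableOn
  have hconst : IntegrableOn (fun _ : Ω => b) A μ :=
    integrableOn_const (measure_ne_top μ A)
  rw [integral_sub hint hconst, setIntegral_const, sub_eq_zero] at hzeroA
  rw [hzeroA, smul_eq_mul, mul_comm]
  rfl
end

section
/- Let v = p₀·exp(-σ²T/2 + σ√T·Z) with Z standard normal, p₀, σ, T > 0, and let v1, v2 be i.i.d. copies. Then E[max(v1 - v2, 0)] = p₀·(2Φ(σ√(T/2)) - 1), where Φ is the standard normal CDF. -/
open MeasureTheory ProbabilityTheory Real Set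
open scoped ENNReal NNReal

namespace MargrabeAux

lemma hgr_wd : gaussianReal 0 1
    = volume.withDensity (fun x => ((gaussianPDFReal 0 1 x).toNNReal : ℝ≥0∞)) := by
  rw [gaussianReal_of_var_ne_zero 0 one_ne_zero]; rfl

lemma integral_gr_density (f : ℝ → ℝ) :
    ∫ x, f x ∂(gaussianReal 0 1) = ∫ x, gaussianPDFReal 0 1 x * f x := by
  rw [hgr_wd, integral_withDensity_eq_integral_smul
    (measurable_gaussianPDFReal 0 1).real_toNNReal f]
  congr 1; funext x
  rw [NNReal.smul_def, smul_eq_mul, Real.coe_toNNReal _ (gaussianPDFReal_nonneg _ _ _)]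

lemma pdf_shift (s x : ℝ) :
    gaussianPDFReal 0 1 x * rexp (s * x) = rexp (s ^ 2 / 2) * gaussianPDFReal 0 1 (x - s) := by
  simp only [gaussianPDFReal, NNReal.coe_one, mul_one, sub_zero]
  rw [mul_assoc, ← Real.exp_add, mul_comm (rexp (s ^ 2 / 2)), mul_assoc, ← Real.exp_add]
  congr 1
  ring

/-- Cameron–Martin style shift for the standard gaussian. -/
lemma cm (s : ℝ) (f : ℝ → ℝ) :
    ∫ x, rexp (s * x) * f x ∂(gaussianReal 0 1)
      = rexp (s ^ 2 / 2) * ∫ x, f (x + s) ∂(gaussianReal 0 1) := by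
  rw [integral_gr_density, integral_gr_density]
  have h1 : ∀ x, gaussianPDFReal 0 1 x * (rexp (s * x) * f x)
      = rexp (s ^ 2 / 2) * (gaussianPDFReal 0 1 (x - s) * f x) := by
    intro x; rw [← mul_assoc, pdf_shift]; ring
  simp_rw [h1, integral_const_mul]
  congr 1
  rw [← integral_add_right_eq_self (fun y => gaussianPDFReal 0 1 (y - s) * f y) s]
  simp

lemma integrable_exp_gr (s : ℝ) :
    Integrable (fun x => rexp (s * x)) (gaussianReal 0 1) := by
  rw [hgr_wd, integrable_withDensity_iff_integrable_smul
    (measurable_gaussianPDFReal 0 1).real_toNNReal]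
  have : (fun x => (gaussianPDFReal 0 1 x).toNNReal • rexp (s * x))
      = fun x => rexp (s ^ 2 / 2) * gaussianPDFReal 0 1 (x - s) := by
    funext x
    rw [NNReal.smul_def, smul_eq_mul, Real.coe_toNNReal _ (gaussianPDFReal_nonneg _ _ _),
      pdf_shift]
  rw [this]
  exact ((integrable_gaussianPDFReal 0 1).comp_sub_right s).const_mul _

lemma gr_singleton (a : ℝ) : gaussianReal 0 1 {a} = 0 :=
  gaussianReal_absolutelyContinuous 0 one_ne_zero Real.volume_singleton

lemma gr_Iic_eq_Iio (a : ℝ) : gaussianReal 0 1 (Iic a) = gaussianReal 0 1 (Iio a) := by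
  refine le_antisymm ?_ (measure_mono Iio_subset_Iic_self)
  rw [← Iio_union_right]
  calc gaussianReal 0 1 (Iio a ∪ {a}) ≤ gaussianReal 0 1 (Iio a) + gaussianReal 0 1 {a} :=
        measure_union_le _ _
    _ = gaussianReal 0 1 (Iio a) := by rw [gr_singleton, add_zero]

lemma gr_Ioi (a : ℝ) : (gaussianReal 0 1 (Ioi a)).toReal
    = 1 - (gaussianReal 0 1 (Iio a)).toReal := by
  have hd : Disjoint (Iio a) (Ioi a) :=
    (Iic_disjoint_Ioi le_rfl).mono_left Iio_subset_Iic_self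
  have hu : gaussianReal 0 1 (Iio a) + gaussianReal 0 1 (Ioi a) = 1 := by
    rw [← measure_union hd measurableSet_Ioi, Iio_union_Ioi,
      measure_compl (measurableSet_singleton a) (measure_ne_top _ _), gr_singleton a,
      measure_univ, tsub_zero]
  have := congrArg ENNReal.toReal hu
  rw [ENNReal.toReal_add (measure_ne_top _ _) (measure_ne_top _ _)] at this
  rw [ENNReal.toReal_one] at this
  linarith

lemma meas_iio (c : ℝ) : Measurable fun x : ℝ => gaussianReal 0 1 (Iio (x + c)) := by
  have : Monotone fun x : ℝ => gaussianReal 0 1 (Iio (x + c)) := fun a b hab =>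
    measure_mono (Iio_subset_Iio (by linarith))
  exact this.measurable

lemma bdd_toReal_integrable {f : ℝ → ℝ≥0∞} (hf : Measurable f) (hle : ∀ x, f x ≤ 1) :
    Integrable (fun x => (f x).toReal) (gaussianReal 0 1) := by
  refine Integrable.mono' (integrable_const 1) hf.ennreal_toReal.aestronglyMeasurable
    (ae_of_all _ fun x => ?_)
  rw [Real.norm_eq_abs, abs_of_nonneg ENNReal.toReal_nonneg]
  simpa using ENNReal.toReal_mono ENNReal.one_ne_top (hle x)

lemma half_ne : (1/2 : ℝ≥0) ≠ 0 := by norm_num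

lemma pdf_prod (u x : ℝ) :
    gaussianPDFReal 0 1 x * gaussianPDFReal 0 1 (u + x)
      = gaussianPDFReal 0 2 u * gaussianPDFReal (-(u/2)) (1/2 : ℝ≥0) x := by
  simp only [gaussianPDFReal, NNReal.coe_one, NNReal.coe_ofNat, NNReal.coe_div, mul_one, sub_zero]
  rw [mul_mul_mul_comm, ← Real.exp_add, mul_mul_mul_comm, ← Real.exp_add]
  congr 1
  · rw [← mul_inv, ← mul_inv, ← Real.sqrt_mul (by positivity), ← Real.sqrt_mul (by positivity)]
    congr 1
    ring
  · congr 1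
    ring

lemma lint_pdf_prod (u : ℝ) :
    ∫⁻ x, gaussianPDF 0 1 x * gaussianPDF 0 1 (u + x) = gaussianPDF 0 2 u := by
  have hpt : ∀ x, gaussianPDF 0 1 x * gaussianPDF 0 1 (u + x)
      = gaussianPDF 0 2 u * ENNReal.ofReal (gaussianPDFReal (-(u/2)) (1/2 : ℝ≥0) x) := by
    intro x
    rw [gaussianPDF, gaussianPDF, gaussianPDF, ← ENNReal.ofReal_mul (gaussianPDFReal_nonneg _ _ _),
      pdf_prod, ENNReal.ofReal_mul (gaussianPDFReal_nonneg _ _ _)]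
  simp_rw [hpt]
  rw [lintegral_const_mul _ (measurable_gaussianPDFReal _ _).ennreal_ofReal,
    lintegral_gaussianPDFReal_eq_one _ half_ne, mul_one]

lemma lint_gr (f : ℝ → ℝ≥0∞) (hf : Measurable f) :
    ∫⁻ x, f x ∂(gaussianReal 0 1) = ∫⁻ x, gaussianPDF 0 1 x * f x := by
  rw [gaussianReal_of_var_ne_zero 0 one_ne_zero,
    lintegral_withDensity_eq_lintegral_mul volume (measurable_gaussianPDF 0 1) hf]
  simp [Pi.mul_apply]

lemma conv_key (c : ℝ) :
    ∫⁻ x, gaussianReal 0 1 (Iio (x + c)) ∂(gaussianReal 0 1)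
      = gaussianReal 0 2 (Iio c) := by
  have hmeas_pdf : Measurable (gaussianPDF 0 1) := measurable_gaussianPDF 0 1
  have hinner : ∀ x : ℝ, gaussianReal 0 1 (Iio (x + c))
      = ∫⁻ u, (Iio c).indicator (fun u => gaussianPDF 0 1 (u + x)) u := by
    intro x
    rw [gaussianReal_apply 0 one_ne_zero, ← lintegral_indicator measurableSet_Iio,
      ← lintegral_add_right_eq_self (fun y => (Iio (x + c)).indicator (gaussianPDF 0 1) y) x]
    congr 1; funext u
    by_cases hu : u < c <;> simp [Set.indicator_apply, add_comm u x, hu]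
  rw [lint_gr _ (meas_iio c)]
  simp_rw [hinner]
  have hpull : ∀ x : ℝ, gaussianPDF 0 1 x * ∫⁻ u, (Iio c).indicator
        (fun u => gaussianPDF 0 1 (u + x)) u
      = ∫⁻ u, (Iio c).indicator (fun u => gaussianPDF 0 1 x * gaussianPDF 0 1 (u + x)) u := by
    intro x
    have hm : Measurable fun u : ℝ => gaussianPDF 0 1 (u + x) := by
      exact hmeas_pdf.comp (measurable_add_const x)
    rw [← lintegral_const_mul _ (hm.indicator measurableSet_Iio)]
    congr 1; funext u
    by_cases hu : u ∈ Iio c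
    · simp [Set.indicator_of_mem hu]
    · simp [Set.indicator_of_notMem hu]
  simp_rw [hpull]
  rw [lintegral_lintegral_swap]
  · have houter : ∀ u : ℝ, (∫⁻ x, (Iio c).indicator
        (fun u => gaussianPDF 0 1 x * gaussianPDF 0 1 (u + x)) u)
        = (Iio c).indicator (gaussianPDF 0 2) u := by
      intro u
      by_cases hu : u ∈ Iio c
      · simp only [Set.indicator_of_mem hu]
        exact lint_pdf_prod u
      · simp [Set.indicator_of_notMem hu]
    simp_rw [houter]
    rw [lintegral_indicator measurableSet_Iio, ← gaussianReal_apply 0 two_ne_zero]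
  · have : (Function.uncurry fun x => (Iio c).indicator
        fun u => gaussianPDF 0 1 x * gaussianPDF 0 1 (u + x))
        = ({p : ℝ × ℝ | p.2 < c}).indicator
          (fun p => gaussianPDF 0 1 p.1 * gaussianPDF 0 1 (p.2 + p.1)) := by
      funext p
      by_cases hp : p.2 < c <;>
        simp [Function.uncurry, Set.indicator_apply, hp]
    rw [this]
    exact (((hmeas_pdf.comp measurable_fst).mul
      (hmeas_pdf.comp (measurable_snd.add measurable_fst))).indicator
      (measurableSet_lt measurable_snd measurable_const)).aemeasurable

lemma gr_two (c : ℝ) :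
    gaussianReal 0 2 (Iio c) = gaussianReal 0 1 (Iio (c / Real.sqrt 2)) := by
  have hmap : (gaussianReal 0 1).map (fun x => Real.sqrt 2 * x) = gaussianReal 0 2 := by
    rw [gaussianReal_map_const_mul]
    congr 1
    · simp
    · apply NNReal.coe_injective
      push_cast
      rw [Real.sq_sqrt (by norm_num : (0:ℝ) ≤ 2)]
      norm_num
  rw [← hmap, Measure.map_apply (measurable_const_mul _) measurableSet_Iio]
  congr 1
  ext x
  simp only [Set.mem_preimage, Set.mem_Iio]
  rw [mul_comm, ← lt_div_iff₀ (by positivity : (0:ℝ) < Real.sqrt 2)]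

theorem main_aux (p0 c s : ℝ) (hp0 : 0 < p0) (hs : 0 < s) (g : ℝ → ℝ)
    (hg : g = fun x => p0 * Real.exp (c + s * x)) :
    ∫ p : ℝ × ℝ, max (g p.1 - g p.2) 0 ∂((gaussianReal 0 1).prod (gaussianReal 0 1))
      = (p0 * Real.exp (c + s ^ 2 / 2))
        * (2 * (gaussianReal 0 1 (Iic (s / Real.sqrt 2))).toReal - 1) := by
  have hgint : Integrable g (gaussianReal 0 1) := by
    have h0 : (fun x => p0 * rexp (c + s * x)) = fun x => (p0 * rexp c) * rexp (s * x) := by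
      funext x; rw [mul_assoc, ← Real.exp_add]
    rw [hg, h0]
    exact (integrable_exp_gr s).const_mul _
  have hmono : StrictMono g := by
    intro a b hab
    rw [hg]
    exact mul_lt_mul_of_pos_left
      (Real.exp_lt_exp.mpr (by linarith [mul_lt_mul_of_pos_left hab hs])) hp0
  have hA : MeasurableSet {p : ℝ × ℝ | p.2 < p.1} :=
    measurableSet_lt measurable_snd measurable_fst
  have hf1 : Integrable (fun p : ℝ × ℝ => g p.1)
      ((gaussianReal 0 1).prod (gaussianReal 0 1)) := by
    have h0 : Measure.map Prod.fst ((gaussianReal 0 1).prod (gaussianReal 0 1))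
        = gaussianReal 0 1 := by rw [Measure.map_fst_prod]; simp
    refine (integrable_map_measure ?_ measurable_fst.aemeasurable).mp ?_
    · rw [h0]; exact hgint.aestronglyMeasurable
    · rw [h0]; exact hgint
  have hf2 : Integrable (fun p : ℝ × ℝ => g p.2)
      ((gaussianReal 0 1).prod (gaussianReal 0 1)) := by
    have h0 : Measure.map Prod.snd ((gaussianReal 0 1).prod (gaussianReal 0 1))
        = gaussianReal 0 1 := by rw [Measure.map_snd_prod]; simp
    refine (integrable_map_measure ?_ measurable_snd.aemeasurable).mp ?_
    · rw [h0]; exact hgint.aestronglyMeasurable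
    · rw [h0]; exact hgint
  have hmax : (fun p : ℝ × ℝ => max (g p.1 - g p.2) 0)
      = fun p => ({p : ℝ × ℝ | p.2 < p.1}).indicator (fun q => g q.1) p
          - ({p : ℝ × ℝ | p.2 < p.1}).indicator (fun q => g q.2) p := by
    funext p
    by_cases hp : p.2 < p.1
    · rw [Set.indicator_of_mem (show p ∈ {p : ℝ × ℝ | p.2 < p.1} from hp),
        Set.indicator_of_mem (show p ∈ {p : ℝ × ℝ | p.2 < p.1} from hp),
        max_eq_left (sub_nonneg.mpr (hmono hp).le)]
    · rw [Set.indicator_of_notMem (show p ∉ {p : ℝ × ℝ | p.2 < p.1} from hp),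
        Set.indicator_of_notMem (show p ∉ {p : ℝ × ℝ | p.2 < p.1} from hp),
        max_eq_right (sub_nonpos.mpr (hmono.monotone (not_lt.mp hp))), sub_zero]
  rw [hmax, integral_sub (hf1.indicator hA) (hf2.indicator hA)]
  -- first term
  have hT1 : ∫ p : ℝ × ℝ, ({p : ℝ × ℝ | p.2 < p.1}).indicator (fun q => g q.1) p
        ∂((gaussianReal 0 1).prod (gaussianReal 0 1))
      = ∫ x, rexp (s * x) * ((p0 * rexp c) * (gaussianReal 0 1 (Iio x)).toReal)
          ∂(gaussianReal 0 1) := by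
    rw [integral_prod _ (hf1.indicator hA)]
    congr 1; funext x
    have : (fun y => ({p : ℝ × ℝ | p.2 < p.1}).indicator (fun q => g q.1) (x, y))
        = (Iio x).indicator (fun _ => g x) := by
      funext y
      by_cases h : y < x <;> simp [Set.indicator_apply, h]
    rw [this, integral_indicator_const _ measurableSet_Iio, smul_eq_mul, hg]
    simp only [Real.exp_add]
    rw [measureReal_def]
    ring
  have hT2 : ∫ p : ℝ × ℝ, ({p : ℝ × ℝ | p.2 < p.1}).indicator (fun q => g q.2) p
        ∂((gaussianReal 0 1).prod (gaussianReal 0 1))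
      = ∫ y, rexp (s * y) * ((p0 * rexp c) * (gaussianReal 0 1 (Ioi y)).toReal)
          ∂(gaussianReal 0 1) := by
    rw [integral_prod_symm _ (hf2.indicator hA)]
    congr 1; funext y
    have : (fun x => ({p : ℝ × ℝ | p.2 < p.1}).indicator (fun q => g q.2) (x, y))
        = (Ioi y).indicator (fun _ => g y) := by
      funext x
      by_cases h : y < x <;> simp [Set.indicator_apply, h]
    rw [this, integral_indicator_const _ measurableSet_Ioi, smul_eq_mul, hg]
    simp only [Real.exp_add]
    rw [measureReal_def]
    ring
  rw [hT1, hT2]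
  have hc1 : ∀ x : ℝ, rexp (s * x) * ((p0 * rexp c) * (gaussianReal 0 1 (Iio x)).toReal)
      = (p0 * rexp c) * (rexp (s * x) * (gaussianReal 0 1 (Iio x)).toReal) := fun x => by ring
  have hc2 : ∀ y : ℝ, rexp (s * y) * ((p0 * rexp c) * (gaussianReal 0 1 (Ioi y)).toReal)
      = (p0 * rexp c) * (rexp (s * y) * (gaussianReal 0 1 (Ioi y)).toReal) := fun y => by ring
  simp_rw [hc1, hc2, integral_const_mul]
  rw [cm s (fun x => (gaussianReal 0 1 (Iio x)).toReal),
    cm s (fun x => (gaussianReal 0 1 (Ioi x)).toReal)]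
  -- now the two shifted integrals
  have hKmeas : Measurable fun x : ℝ => gaussianReal 0 1 (Iio (x + s)) := meas_iio s
  have hK1int : Integrable (fun x => (gaussianReal 0 1 (Iio (x + s))).toReal)
      (gaussianReal 0 1) := bdd_toReal_integrable hKmeas fun x => prob_le_one
  have hK2 : ∫ x, (gaussianReal 0 1 (Ioi (x + s))).toReal ∂(gaussianReal 0 1)
      = 1 - ∫ x, (gaussianReal 0 1 (Iio (x + s))).toReal ∂(gaussianReal 0 1) := by
    have : (fun x => (gaussianReal 0 1 (Ioi (x + s))).toReal)
        = fun x => (1 : ℝ) - (gaussianReal 0 1 (Iio (x + s))).toReal := by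
      funext x; exact gr_Ioi (x + s)
    rw [this, integral_sub (integrable_const 1) hK1int]
    simp
  have hK1 : ∫ x, (gaussianReal 0 1 (Iio (x + s))).toReal ∂(gaussianReal 0 1)
      = (gaussianReal 0 1 (Iic (s / Real.sqrt 2))).toReal := by
    rw [integral_toReal hKmeas.aemeasurable
      (ae_of_all _ fun x => lt_of_le_of_lt prob_le_one ENNReal.one_lt_top),
      conv_key, gr_two, ← gr_Iic_eq_Iio]
  rw [hK1, hK2, hK1]
  rw [show p0 * rexp (c + s ^ 2 / 2) = p0 * rexp c * rexp (s ^ 2 / 2) by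
    rw [mul_assoc, ← Real.exp_add]]
  ring

end MargrabeAux

open MargrabeAux in
theorem margrabe_iid_lognormal
    {Ω : Type*} [MeasurableSpace Ω] (μ : Measure Ω) [IsProbabilityMeasure μ]
    (Z1 Z2 : Ω → ℝ) (hm1 : Measurable Z1) (hm2 : Measurable Z2)
    (hindep : IndepFun Z1 Z2 μ)
    (h1 : μ.map Z1 = gaussianReal 0 1) (h2 : μ.map Z2 = gaussianReal 0 1)
    (p0 σ T : ℝ) (hp0 : 0 < p0) (hσ : 0 < σ) (hT : 0 < T) :
    ∫ ω, max (p0 * Real.exp (-σ ^ 2 * T / 2 + σ * Real.sqrt T * Z1 ω)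
            - p0 * Real.exp (-σ ^ 2 * T / 2 + σ * Real.sqrt T * Z2 ω)) 0 ∂μ
      = p0 * (2 * (gaussianReal 0 1 (Set.Iic (σ * Real.sqrt (T / 2)))).toReal - 1) := by
  have hs : 0 < σ * Real.sqrt T := mul_pos hσ (Real.sqrt_pos.mpr hT)
  have hmap : μ.map (fun ω => (Z1 ω, Z2 ω)) = (gaussianReal 0 1).prod (gaussianReal 0 1) := by
    rw [(indepFun_iff_map_prod_eq_prod_map_map hm1.aemeasurable hm2.aemeasurable).mp hindep,
      h1, h2]
  have hFc : Continuous fun p : ℝ × ℝ =>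
      max (p0 * Real.exp (-σ ^ 2 * T / 2 + σ * Real.sqrt T * p.1)
        - p0 * Real.exp (-σ ^ 2 * T / 2 + σ * Real.sqrt T * p.2)) 0 := by
    fun_prop
  have step : (∫ ω, max (p0 * Real.exp (-σ ^ 2 * T / 2 + σ * Real.sqrt T * Z1 ω)
          - p0 * Real.exp (-σ ^ 2 * T / 2 + σ * Real.sqrt T * Z2 ω)) 0 ∂μ)
      = ∫ p : ℝ × ℝ, max ((fun x => p0 * Real.exp (-σ ^ 2 * T / 2 + σ * Real.sqrt T * x)) p.1
          - (fun x => p0 * Real.exp (-σ ^ 2 * T / 2 + σ * Real.sqrt T * x)) p.2) 0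
          ∂((gaussianReal 0 1).prod (gaussianReal 0 1)) := by
    rw [← hmap]
    exact (integral_map (hm1.prodMk hm2).aemeasurable hFc.aestronglyMeasurable).symm
  rw [step, main_aux p0 (-σ ^ 2 * T / 2) (σ * Real.sqrt T) hp0 hs _ rfl]
  have he : -σ ^ 2 * T / 2 + (σ * Real.sqrt T) ^ 2 / 2 = 0 := by
    rw [mul_pow, Real.sq_sqrt hT.le]; ring
  have harg : σ * Real.sqrt T / Real.sqrt 2 = σ * Real.sqrt (T / 2) := by
    rw [Real.sqrt_div hT.le, mul_div_assoc]
  rw [he, Real.exp_zero, mul_one, harg]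
end

section
/- Let v1, v2 be i.i.d. nonnegative integrable with continuous strictly increasing CDF F and density f, let 0 < L < E[v], let v̲ satisfy E[v·1{v<v̲}] = L·F(v̲), and define Π_B = ∫_{v̲}^∞ (∫₀^v F(x)dx) f(v) dv + (E[v·1{L<v<v̲}] - L·(F(v̲)-F(L)))·F(v̲). Then Π_B = E[max(v1·1{v1≥v̲} - v2·1{v2≥v̲}, 0)] + F(v̲)·E[(v - L)·1{L < v < v̲}] - (1 - F(v̲))·L·F(v̲). -/
open MeasureTheory ProbabilityTheory Filter Set
open scoped ENNReal Topology

lemma deriv_nonneg_of_monotone {F : ℝ → ℝ} {c x : ℝ} (hmono : Monotone F)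
    (hd : HasDerivAt F c x) : 0 ≤ c := by
  rw [hasDerivAt_iff_tendsto_slope] at hd
  refine ge_of_tendsto hd ?_
  filter_upwards [self_mem_nhdsWithin] with y hy
  have hy' : y ≠ x := hy
  rcases lt_or_gt_of_ne hy' with h | h
  · rw [slope_def_field]
    have hnum : F y - F x ≤ 0 := sub_nonpos.2 (hmono h.le)
    have hden : y - x < 0 := by linarith
    exact div_nonneg_iff.mpr (Or.inr ⟨hnum, hden.le⟩)
  · rw [slope_def_field]
    exact div_nonneg (sub_nonneg.2 (hmono h.le)) (by linarith)

set_option maxHeartbeats 800000 in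
lemma intervalIntegrable_of_deriv {F f : ℝ → ℝ} (hcont : Continuous F) (hmono : Monotone F)
    (hb1 : ∀ x, F x ≤ 1) (hb0 : ∀ x, 0 ≤ F x)
    (hderiv : ∀ x > 0, HasDerivAt F (f x) x) {a b : ℝ} (ha : 0 < a) (hab : a ≤ b) :
    IntervalIntegrable f volume a b := by
  rcases eq_or_lt_of_le hab with rfl | hab
  · exact IntervalIntegrable.refl
  rw [intervalIntegrable_iff_integrableOn_Ioc_of_le hab.le]
  have hsub : Ioc a b ⊆ Ioi (0:ℝ) := fun x hx => ha.trans hx.1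
  -- f agrees with deriv F on Ioc a b
  have hfd : ∀ x ∈ Ioc a b, f x = deriv F x := fun x hx => ((hderiv x (hsub hx)).deriv).symm
  have hmeasset : MeasurableSet (Ioc a b) := measurableSet_Ioc
  have hfm : AEMeasurable f (volume.restrict (Ioc a b)) := by
    refine (measurable_deriv F).aemeasurable.congr ?_
    refine ((ae_restrict_iff' hmeasset).2 (ae_of_all _ fun x hx => (hfd x hx).symm))
  have hfnn : ∀ x ∈ Ioc a b, 0 ≤ f x := fun x hx =>
    deriv_nonneg_of_monotone hmono (hderiv x (hsub hx))
  -- Fatou bound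
  have hseq : ∀ x ∈ Ioc a b, Tendsto
      (fun n : ℕ => ENNReal.ofReal (((n:ℝ)+1) * (F (x + 1/((n:ℝ)+1)) - F x))) atTop
      (𝓝 (ENNReal.ofReal (f x))) := by
    intro x hx
    refine (ENNReal.continuous_ofReal.tendsto _).comp ?_
    have hd := (hderiv x (hsub hx))
    rw [hasDerivAt_iff_tendsto_slope] at hd
    have h1n : Tendsto (fun n : ℕ => x + 1/((n:ℝ)+1)) atTop (𝓝[≠] x) := by
      refine tendsto_nhdsWithin_of_tendsto_nhds_of_eventually_within _ ?_ ?_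
      · have := tendsto_one_div_add_atTop_nhds_zero_nat (𝕜 := ℝ)
        have h2 := this.const_add x
        simpa using h2
      · filter_upwards with n
        have : (0:ℝ) < 1/((n:ℝ)+1) := by positivity
        simp only [mem_compl_iff, mem_singleton_iff]
        intro h; nlinarith [h]
    have := hd.comp h1n
    refine this.congr ?_
    intro n
    simp only [Function.comp_apply]
    rw [slope_def_field]
    have hpos : (0:ℝ) < 1/((n:ℝ)+1) := by positivity
    field_simp
    ring
  have key : ∫⁻ x in Ioc a b, ENNReal.ofReal (f x) ≤ 1 := by
    have hcongr : ∫⁻ x in Ioc a b, ENNReal.ofReal (f x)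
        = ∫⁻ x in Ioc a b, liminf (fun n : ℕ =>
            ENNReal.ofReal (((n:ℝ)+1) * (F (x + 1/((n:ℝ)+1)) - F x))) atTop := by
      refine setLIntegral_congr_fun hmeasset (fun x hx => ?_)
      exact ((hseq x hx).liminf_eq).symm
    rw [hcongr]
    refine le_trans (lintegral_liminf_le fun n => ?_) ?_
    · exact (ENNReal.continuous_ofReal.comp (by continuity)).measurable
    -- each term bounded by 1 eventually
    have hbound : ∀ᶠ n : ℕ in atTop,
        ∫⁻ x in Ioc a b, ENNReal.ofReal (((n:ℝ)+1) * (F (x + 1/((n:ℝ)+1)) - F x)) ≤ 1 := by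
      obtain ⟨N, hN⟩ := exists_nat_gt (1/(b-a))
      filter_upwards [eventually_ge_atTop N] with n hn
      set c : ℝ := 1/((n:ℝ)+1) with hc
      have hc0 : 0 < c := by positivity
      have hcba : c ≤ b - a := by
        rw [hc, div_le_iff₀ (by positivity)]
        have : 1/(b-a) < (n:ℝ)+1 := lt_of_lt_of_le hN (by exact_mod_cast Nat.le_succ_of_le hn)
        rw [div_lt_iff₀ (by linarith)] at this
        nlinarith
      -- pass to Bochner integral
      have hint : IntegrableOn (fun x => ((n:ℝ)+1) * (F (x + c) - F x)) (Ioc a b) := by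
        apply Continuous.integrableOn_Ioc
        continuity
      have hnn : 0 ≤ᵐ[volume.restrict (Ioc a b)] fun x => ((n:ℝ)+1) * (F (x + c) - F x) := by
        refine ae_of_all _ fun x => ?_
        have := hmono (by linarith : x ≤ x + c)
        have h1 : (0:ℝ) ≤ (n:ℝ)+1 := by positivity
        exact mul_nonneg h1 (sub_nonneg.2 this)
      rw [← ofReal_integral_eq_lintegral_ofReal hint hnn]
      rw [show (1:ℝ≥0∞) = ENNReal.ofReal 1 by simp]
      apply ENNReal.ofReal_le_ofReal
      -- the integral computation
      have hIoc : ∫ x in Ioc a b, ((n:ℝ)+1) * (F (x + c) - F x)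
          = ((n:ℝ)+1) * (∫ x in a..b, (F (x + c) - F x)) := by
        rw [intervalIntegral.integral_of_le hab.le, ← integral_const_mul]
      rw [hIoc]
      have hsplit : (∫ x in a..b, (F (x + c) - F x))
          = (∫ x in b..(b+c), F x) - (∫ x in a..(a+c), F x) := by
        rw [intervalIntegral.integral_sub (by apply Continuous.intervalIntegrable; continuity)
          (hcont.intervalIntegrable _ _)]
        rw [intervalIntegral.integral_comp_add_right]
        have h1 : (∫ x in (a+c)..(b+c), F x) = (∫ x in (a+c)..b, F x) + ∫ x in b..(b+c), F x := by
          rw [intervalIntegral.integral_add_adjacent_intervals] <;>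
            exact hcont.intervalIntegrable _ _
        have h2 : (∫ x in a..b, F x) = (∫ x in a..(a+c), F x) + ∫ x in (a+c)..b, F x := by
          rw [intervalIntegral.integral_add_adjacent_intervals] <;>
            exact hcont.intervalIntegrable _ _
        rw [h1, h2]; ring
      rw [hsplit]
      have hub : (∫ x in b..(b+c), F x) ≤ c := by
        have h0 := intervalIntegral.integral_mono_on (by linarith : b ≤ b + c)
          (hcont.intervalIntegrable _ _) (intervalIntegrable_const (μ := volume) (c := (1:ℝ)))
          (fun x _ => hb1 x)
        have h1 : (∫ _x in b..(b+c), (1:ℝ)) = c := by rw [intervalIntegral.integral_const, smul_eq_mul]; ring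
        linarith
      have hlb : 0 ≤ ∫ x in a..(a+c), F x := by
        apply intervalIntegral.integral_nonneg (by linarith)
        exact fun x _ => hb0 x
      have hc1 : ((n:ℝ)+1) * c = 1 := by rw [hc]; field_simp
      have hn1 : (0:ℝ) ≤ (n:ℝ)+1 := by positivity
      calc ((n:ℝ)+1) * ((∫ x in b..(b+c), F x) - ∫ x in a..(a+c), F x)
          ≤ ((n:ℝ)+1) * c := mul_le_mul_of_nonneg_left (by linarith) hn1
        _ = 1 := hc1
    refine le_trans (Filter.liminf_le_liminf hbound) ?_
    simp [Filter.liminf_const]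
  refine ⟨hfm.aestronglyMeasurable, ?_⟩
  rw [hasFiniteIntegral_iff_norm]
  have : ∫⁻ x in Ioc a b, ENNReal.ofReal ‖f x‖ = ∫⁻ x in Ioc a b, ENNReal.ofReal (f x) := by
    refine setLIntegral_congr_fun hmeasset (fun x hx => ?_)
    rw [Real.norm_of_nonneg (hfnn x hx)]
  rw [this]; exact lt_of_le_of_lt key (by norm_num)


theorem key {Ω : Type*} [MeasurableSpace Ω] (μ : Measure Ω) [IsProbabilityMeasure μ]
    (v1 v2 : Ω → ℝ) (hm1 : Measurable v1) (hm2 : Measurable v2)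
    (h1 : Integrable v1 μ) (h2 : Integrable v2 μ)
    (hpos1 : ∀ ω, 0 ≤ v1 ω) (hpos2 : ∀ ω, 0 ≤ v2 ω)
    (hindep : IndepFun v1 v2 μ) (hid : IdentDistrib v1 v2 μ μ)
    (F f : ℝ → ℝ) (hF : ∀ x, F x = (μ {ω | v1 ω ≤ x}).toReal)
    (hcont : Continuous F)
    (hderiv : ∀ x > 0, HasDerivAt F (f x) x)
    (L u : ℝ) (hL : 0 < L) (huL : L < u)
    (hudef : ∫ ω in {ω | v1 ω < u}, v1 ω ∂μ = L * F u) :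
    (∫ v in Set.Ioi u, (∫ x in (0:ℝ)..v, F x) * f v)
      + ((∫ ω in {ω | L < v1 ω ∧ v1 ω < u}, v1 ω ∂μ) - L * (F u - F L)) * F u
    = (∫ ω, max ((if u ≤ v1 ω then v1 ω else 0) - (if u ≤ v2 ω then v2 ω else 0)) 0 ∂μ)
      + F u * (∫ ω in {ω | L < v1 ω ∧ v1 ω < u}, (v1 ω - L) ∂μ)
      - (1 - F u) * L * F u := by
  have hu0 : 0 < u := hL.trans huL
  -- basic CDF facts
  have hFle : ∀ x, μ {ω | v1 ω ≤ x} = ENNReal.ofReal (F x) := fun x => by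
    rw [hF x, ENNReal.ofReal_toReal (measure_ne_top μ _)]
  have hF0 : ∀ x, 0 ≤ F x := fun x => hF x ▸ ENNReal.toReal_nonneg
  have hF1 : ∀ x, F x ≤ 1 := fun x => by
    rw [hF x]
    have : μ {ω | v1 ω ≤ x} ≤ 1 := prob_le_one
    simpa using ENNReal.toReal_mono (by norm_num) this
  have hFmono : Monotone F := by
    intro x y hxy
    rw [hF x, hF y]
    exact ENNReal.toReal_mono (measure_ne_top μ _)
      (measure_mono (fun ω (h : v1 ω ≤ x) => h.trans hxy))
  have hFlt : ∀ x, μ {ω | v1 ω < x} = ENNReal.ofReal (F x) := by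
    intro x
    have hmem : {ω | v1 ω < x} = ⋃ n : ℕ, {ω | v1 ω ≤ x - 1/((n:ℝ)+1)} := by
      ext ω
      simp only [mem_setOf_eq, mem_iUnion]
      constructor
      · intro h
        obtain ⟨n, hn⟩ := exists_nat_one_div_lt (show 0 < x - v1 ω by linarith)
        exact ⟨n, by rw [le_sub_comm] ; exact le_of_lt (by simpa using hn)⟩
      · rintro ⟨n, hn⟩
        have : (0:ℝ) < 1/((n:ℝ)+1) := by positivity
        linarith
    have hmonoS : Monotone (fun n : ℕ => {ω | v1 ω ≤ x - 1/((n:ℝ)+1)}) := by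
      intro m n hmn ω (h : v1 ω ≤ _)
      refine h.trans (by
        have h0 : (m:ℝ) ≤ (n:ℝ) := Nat.cast_le.2 hmn
        have h1 : ((m:ℝ)+1) ≤ ((n:ℝ)+1) := by linarith
        have : 1/((n:ℝ)+1) ≤ 1/((m:ℝ)+1) := by
          apply one_div_le_one_div_of_le (by positivity) h1
        linarith)
    have htend := tendsto_measure_iUnion_atTop (μ := μ) hmonoS
    rw [← hmem] at htend
    have htend2 : Tendsto (fun n : ℕ => μ {ω | v1 ω ≤ x - 1/((n:ℝ)+1)}) atTop
        (𝓝 (ENNReal.ofReal (F x))) := by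
      have hx : Tendsto (fun n : ℕ => x - 1/((n:ℝ)+1)) atTop (𝓝 x) := by
        have := tendsto_one_div_add_atTop_nhds_zero_nat (𝕜 := ℝ)
        have h2 := (tendsto_const_nhds (x := x) (f := atTop (α := ℕ))).sub this
        simpa using h2
      have := (ENNReal.continuous_ofReal.tendsto _).comp ((hcont.tendsto x).comp hx)
      simpa [Function.comp_def, hFle] using this
    exact tendsto_nhds_unique htend htend2

  -- diff measure helper
  have hdiff : ∀ t : ℝ, t < u → μ ({ω | v1 ω < u} \ {ω | v1 ω ≤ t}) = ENNReal.ofReal (F u - F t) := by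
    intro t ht
    rw [show μ ({ω | v1 ω < u} \ {ω | v1 ω ≤ t})
          = μ {ω | v1 ω < u} - μ {ω | v1 ω ≤ t} from
        measure_diff (fun ω (h : v1 ω ≤ t) => lt_of_le_of_lt h ht)
          ((measurableSet_le hm1 measurable_const).nullMeasurableSet) (measure_ne_top μ _),
      hFlt, hFle, ENNReal.ofReal_sub _ (hF0 t)]
  -- Layercake 1 : primitive of F at u
  have hWmeas : Measurable (fun ω => if v1 ω < u then v1 ω else 0) :=
    Measurable.ite (measurableSet_lt hm1 measurable_const) hm1 measurable_const
  have hWint : Integrable (fun ω => if v1 ω < u then v1 ω else 0) μ := by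
    refine h1.mono' hWmeas.aestronglyMeasurable (ae_of_all _ fun ω => ?_)
    by_cases h : v1 ω < u <;>
      simp [h, Real.norm_of_nonneg (hpos1 ω), hpos1 ω]
  have hGu : (∫ x in (0:ℝ)..u, F x) = (u - L) * F u := by
    have hWnn : 0 ≤ᵐ[μ] (fun ω => if v1 ω < u then v1 ω else 0) :=
      ae_of_all _ fun ω => by by_cases h : v1 ω < u <;> simp [h, hpos1 ω]
    have hlayer := hWint.integral_eq_integral_meas_lt hWnn
    have hWm : ∀ t : ℝ, 0 < t →
        μ {a | t < (if v1 a < u then v1 a else 0)} = ENNReal.ofReal (F u - F t) := by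
      intro t ht
      have hset : {a | t < (if v1 a < u then v1 a else 0)}
          = {ω | v1 ω < u} \ {ω | v1 ω ≤ t} := by
        ext ω
        simp only [mem_setOf_eq, mem_diff, not_le]
        by_cases h : v1 ω < u
        · rw [if_pos h]
          exact ⟨fun h' => ⟨h, h'⟩, fun h' => h'.2⟩
        · rw [if_neg h]
          exact ⟨fun h' => absurd h' (by linarith), fun h' => absurd h'.1 h⟩
      rw [hset]
      rcases lt_or_ge t u with h | h
      · exact hdiff t h
      · have hemp : {ω | v1 ω < u} \ {ω | v1 ω ≤ t} = ∅ := by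
          ext ω; simp only [mem_diff, mem_setOf_eq, not_le, mem_empty_iff_false, iff_false]
          rintro ⟨h1', h2'⟩; linarith
        rw [hemp, measure_empty, Eq.comm, ENNReal.ofReal_eq_zero]
        linarith [hFmono h]
    have hIoicong : (∫ t in Ioi (0:ℝ),
          (μ {a | t < (if v1 a < u then v1 a else 0)}).toReal)
        = ∫ t in Ioi (0:ℝ), (if t ≤ u then F u - F t else 0) := by
      refine setIntegral_congr_fun measurableSet_Ioi (fun t ht => ?_)
      rw [hWm t ht]
      rcases le_or_gt t u with h | h
      · simp only [h, if_true]
        exact ENNReal.toReal_ofReal (by linarith [hFmono h])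
      · simp only [not_le.2 h, if_false]
        rw [ENNReal.ofReal_eq_zero.2 (by linarith [hFmono h.le]), ENNReal.toReal_zero]
    have hsplitset : Ioi (0:ℝ) = Ioc 0 u ∪ Ioi u := (Ioc_union_Ioi_eq_Ioi hu0.le).symm
    have hi1 : IntegrableOn (fun t => if t ≤ u then F u - F t else 0) (Ioc 0 u) := by
      have hbase : IntegrableOn (fun t => F u - F t) (Ioc (0:ℝ) u) volume :=
        (continuous_const.sub hcont).integrableOn_Ioc
      exact hbase.congr_fun (fun t ht => by simp [ht.2]) measurableSet_Ioc
    have hi2 : IntegrableOn (fun t => if t ≤ u then F u - F t else 0) (Ioi u) := by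
      exact (integrableOn_zero).congr_fun
        (fun t ht => by simp [not_le.2 (mem_Ioi.1 ht)]) measurableSet_Ioi
    have hsplit : (∫ t in Ioi (0:ℝ), (if t ≤ u then F u - F t else 0))
        = (∫ t in Ioc (0:ℝ) u, (if t ≤ u then F u - F t else 0))
          + ∫ t in Ioi u, (if t ≤ u then F u - F t else 0) := by
      rw [hsplitset]
      exact setIntegral_union (Ioc_disjoint_Ioi le_rfl) measurableSet_Ioi hi1 hi2
    have hz : (∫ t in Ioi u, (if t ≤ u then F u - F t else 0)) = 0 := by
      rw [setIntegral_congr_fun measurableSet_Ioi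
        (fun t (ht : t ∈ Ioi u) => by simp [not_le.2 (mem_Ioi.1 ht)] :
          EqOn _ (fun _ => (0:ℝ)) _)]
      simp
    have hc : (∫ t in Ioc (0:ℝ) u, (if t ≤ u then F u - F t else 0))
        = u * F u - ∫ x in (0:ℝ)..u, F x := by
      rw [setIntegral_congr_fun measurableSet_Ioc
        (fun t (ht : t ∈ Ioc 0 u) => by simp [ht.2] : EqOn _ (fun t => F u - F t) _)]
      rw [← intervalIntegral.integral_of_le hu0.le,
        intervalIntegral.integral_sub (intervalIntegrable_const)
          (hcont.intervalIntegrable _ _),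
        intervalIntegral.integral_const, smul_eq_mul]
      ring
    have hW2 : (∫ ω in {ω | v1 ω < u}, v1 ω ∂μ)
        = ∫ ω, (if v1 ω < u then v1 ω else 0) ∂μ := by
      rw [← integral_indicator (measurableSet_lt hm1 measurable_const)]
      congr 1
    simp only [measureReal_def] at hlayer
    rw [hW2, hlayer, hIoicong, hsplit, hz, hc] at hudef
    linarith
  -- X = truncation above u
  have hXmeas : Measurable (fun ω => if u ≤ v1 ω then v1 ω else 0) :=
    Measurable.ite (measurableSet_le measurable_const hm1) hm1 measurable_const
  have hXint : Integrable (fun ω => if u ≤ v1 ω then v1 ω else 0) μ := by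
    refine h1.mono' hXmeas.aestronglyMeasurable (ae_of_all _ fun ω => ?_)
    by_cases h : u ≤ v1 ω <;>
      simp [h, Real.norm_of_nonneg (hpos1 ω), hpos1 ω]
  have hXnn : ∀ ω, 0 ≤ (if u ≤ v1 ω then v1 ω else 0) :=
    fun ω => by by_cases h : u ≤ v1 ω <;> simp [h, hpos1 ω]
  -- measure of upper level sets of X
  have hXm : ∀ t : ℝ, 0 < t →
      μ {a | t < (if u ≤ v1 a then v1 a else 0)} = ENNReal.ofReal (1 - F (max t u)) := by
    intro t ht
    rcases lt_or_ge t u with h | h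
    · have hset : {a | t < (if u ≤ v1 a then v1 a else 0)} = {ω | v1 ω < u}ᶜ := by
        ext ω
        simp only [mem_setOf_eq, mem_compl_iff, not_lt]
        by_cases hh : u ≤ v1 ω
        · rw [if_pos hh]
          exact ⟨fun _ => hh, fun h' => lt_of_lt_of_le h h'⟩
        · rw [if_neg hh]
          exact ⟨fun h' => absurd h' (by linarith), fun h' => absurd h' hh⟩
      rw [hset, measure_compl (measurableSet_lt hm1 measurable_const) (measure_ne_top μ _),
        hFlt, measure_univ, max_eq_right h.le,
        show (1:ℝ≥0∞) = ENNReal.ofReal (1:ℝ) by simp,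
        ← ENNReal.ofReal_sub _ (hF0 u)]
    · have hset : {a | t < (if u ≤ v1 a then v1 a else 0)} = {ω | v1 ω ≤ t}ᶜ := by
        ext ω
        simp only [mem_setOf_eq, mem_compl_iff, not_le]
        by_cases hh : u ≤ v1 ω
        · rw [if_pos hh]
        · rw [if_neg hh]
          exact ⟨fun h' => absurd h' (by linarith), fun h' => (hh (le_trans h h'.le)).elim⟩
      rw [hset, measure_compl (measurableSet_le hm1 measurable_const) (measure_ne_top μ _),
        hFle, measure_univ, max_eq_left h,
        show (1:ℝ≥0∞) = ENNReal.ofReal (1:ℝ) by simp,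
        ← ENNReal.ofReal_sub _ (hF0 t)]
  -- integrability of the tail 1 - F on (u, ∞)
  have hT_int : IntegrableOn (fun t => 1 - F t) (Ioi u) volume := by
    have hXlint := lintegral_eq_lintegral_meas_lt μ (ae_of_all _ hXnn)
      hXmeas.aemeasurable
    have hfin : (∫⁻ t in Ioi (0:ℝ), μ {a | t < (if u ≤ v1 a then v1 a else 0)}) < ⊤ := by
      rw [← hXlint]; exact hXint.lintegral_lt_top
    have hsub : (∫⁻ t in Ioi u, ENNReal.ofReal (1 - F t)) < ⊤ := by
      have hcong : (∫⁻ t in Ioi u, ENNReal.ofReal (1 - F t))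
          = ∫⁻ t in Ioi u, μ {a | t < (if u ≤ v1 a then v1 a else 0)} := by
        refine setLIntegral_congr_fun measurableSet_Ioi (fun t ht => ?_)
        rw [hXm t (hu0.trans ht), max_eq_left (le_of_lt ht)]
      rw [hcong]
      exact lt_of_le_of_lt (lintegral_mono_set (Ioi_subset_Ioi hu0.le)) hfin
    refine ⟨((continuous_const.sub hcont).aestronglyMeasurable).restrict, ?_⟩
    rw [hasFiniteIntegral_iff_norm]
    have : ∫⁻ t in Ioi u, ENNReal.ofReal ‖1 - F t‖ = ∫⁻ t in Ioi u, ENNReal.ofReal (1 - F t) := by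
      refine setLIntegral_congr_fun measurableSet_Ioi (fun t _ => ?_)
      rw [Real.norm_of_nonneg (by linarith [hF1 t])]
    rw [this]; exact hsub
  -- layercake 2 : expectation of X
  have hEX : (∫ ω, (if u ≤ v1 ω then v1 ω else 0) ∂μ)
      = u * (1 - F u) + ∫ t in Ioi u, (1 - F t) := by
    have hlayer := hXint.integral_eq_integral_meas_lt (ae_of_all _ hXnn)
    have hIoicong : (∫ t in Ioi (0:ℝ),
          (μ {a | t < (if u ≤ v1 a then v1 a else 0)}).toReal)
        = ∫ t in Ioi (0:ℝ), (if t ≤ u then 1 - F u else 1 - F t) := by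
      refine setIntegral_congr_fun measurableSet_Ioi (fun t ht => ?_)
      rw [hXm t ht]
      rcases le_or_gt t u with h | h
      · rw [if_pos h, max_eq_right h]
        exact ENNReal.toReal_ofReal (by linarith [hF1 u])
      · rw [if_neg (not_le.2 h), max_eq_left h.le]
        exact ENNReal.toReal_ofReal (by linarith [hF1 t])
    have hi1 : IntegrableOn (fun t => if t ≤ u then 1 - F u else 1 - F t) (Ioc 0 u) := by
      exact (integrableOn_const (C := 1 - F u) measure_Ioc_lt_top.ne).congr_fun
        (fun t ht => by simp [ht.2]) measurableSet_Ioc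
    have hi2 : IntegrableOn (fun t => if t ≤ u then 1 - F u else 1 - F t) (Ioi u) := by
      exact hT_int.congr_fun (fun t ht => by simp [not_le.2 (mem_Ioi.1 ht)]) measurableSet_Ioi
    have hsplit : (∫ t in Ioi (0:ℝ), (if t ≤ u then 1 - F u else 1 - F t))
        = (∫ t in Ioc (0:ℝ) u, (if t ≤ u then 1 - F u else 1 - F t))
          + ∫ t in Ioi u, (if t ≤ u then 1 - F u else 1 - F t) := by
      rw [(Ioc_union_Ioi_eq_Ioi hu0.le).symm]
      exact setIntegral_union (Ioc_disjoint_Ioi le_rfl) measurableSet_Ioi hi1 hi2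
    have hc1 : (∫ t in Ioc (0:ℝ) u, (if t ≤ u then 1 - F u else 1 - F t)) = u * (1 - F u) := by
      rw [setIntegral_congr_fun measurableSet_Ioc
        (fun t (ht : t ∈ Ioc 0 u) => by simp [ht.2] : EqOn _ (fun _ => 1 - F u) _),
        setIntegral_const, measureReal_def, Real.volume_Ioc, smul_eq_mul, sub_zero,
        ENNReal.toReal_ofReal hu0.le]
    have hc2 : (∫ t in Ioi u, (if t ≤ u then 1 - F u else 1 - F t)) = ∫ t in Ioi u, (1 - F t) := by
      refine setIntegral_congr_fun measurableSet_Ioi (fun t ht => ?_)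
      simp [not_le.2 (mem_Ioi.1 ht)]
    simp only [measureReal_def] at hlayer
    rw [hlayer, hIoicong, hsplit, hc1, hc2]
  -- the middle set
  have hSset : {ω | L < v1 ω ∧ v1 ω < u} = {ω | v1 ω < u} \ {ω | v1 ω ≤ L} := by
    ext ω
    simp only [mem_setOf_eq, mem_diff, not_le]
    exact ⟨fun h => ⟨h.2, h.1⟩, fun h => ⟨h.2, h.1⟩⟩
  have hSmeas : MeasurableSet {ω | L < v1 ω ∧ v1 ω < u} := by
    rw [hSset]
    exact (measurableSet_lt hm1 measurable_const).diff (measurableSet_le hm1 measurable_const)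
  have hSμ : (μ {ω | L < v1 ω ∧ v1 ω < u}).toReal = F u - F L := by
    rw [hSset, hdiff L huL, ENNReal.toReal_ofReal (by linarith [hFmono huL.le])]
  have hAL : (∫ ω in {ω | L < v1 ω ∧ v1 ω < u}, (v1 ω - L) ∂μ)
      = (∫ ω in {ω | L < v1 ω ∧ v1 ω < u}, v1 ω ∂μ) - L * (F u - F L) := by
    rw [integral_sub h1.integrableOn (integrableOn_const (C := L) (measure_lt_top μ _).ne)]
    congr 1
    rw [setIntegral_const, measureReal_def, smul_eq_mul, hSμ]
    ring
  -- integrabilities on the tail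
  have hK_int : IntegrableOn (fun t => F t * (1 - F t)) (Ioi u) volume := by
    refine hT_int.bdd_mul (c := 1) hcont.aestronglyMeasurable.restrict (ae_of_all _ fun t => ?_)
    rw [Real.norm_eq_abs, abs_of_nonneg (hF0 t)]; exact hF1 t
  have hJ_int : IntegrableOn (fun t => (1 - F t) * (F t - F u)) (Ioi u) volume := by
    have hb : IntegrableOn (fun t => (F t - F u) * (1 - F t)) (Ioi u) volume := by
      refine hT_int.bdd_mul (hcont.sub continuous_const).aestronglyMeasurable.restrict
        (c := 2) (ae_of_all _ fun t => ?_)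
      rw [Real.norm_eq_abs, abs_le]
      constructor <;> nlinarith [hF0 t, hF1 t, hF0 u, hF1 u]
    exact hb.congr (ae_of_all _ fun t => mul_comm _ _)
  have hKJ : (∫ t in Ioi u, (1 - F t) * (F t - F u))
      = (∫ t in Ioi u, F t * (1 - F t)) - F u * ∫ t in Ioi u, (1 - F t) := by
    have hcong : (∫ t in Ioi u, (1 - F t) * (F t - F u))
        = ∫ t in Ioi u, (F t * (1 - F t) - F u * (1 - F t)) := by
      refine setIntegral_congr_fun measurableSet_Ioi (fun t _ => ?_)
      ring
    rw [hcong, integral_sub hK_int (hT_int.const_mul (F u)), integral_const_mul]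
  -- split of the max integrand, and independence
  have hhmeas : Measurable (fun ω =>
      if u ≤ v2 ω then max ((if u ≤ v1 ω then v1 ω else 0) - v2 ω) 0 else 0) := by
    refine Measurable.ite (measurableSet_le measurable_const hm2) ?_ measurable_const
    exact (hXmeas.sub hm2).max measurable_const
  have hhint : Integrable (fun ω =>
      if u ≤ v2 ω then max ((if u ≤ v1 ω then v1 ω else 0) - v2 ω) 0 else 0) μ := by
    refine hXint.mono' hhmeas.aestronglyMeasurable (ae_of_all _ fun ω => ?_)
    by_cases h : u ≤ v2 ω
    · rw [if_pos h, Real.norm_of_nonneg (le_max_right _ _)]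
      exact max_le (by linarith [hpos2 ω, hXnn ω]) (hXnn ω)
    · rw [if_neg h, norm_zero]; exact hXnn ω
  have hchi_meas : Measurable (fun x : ℝ => if x < u then (1:ℝ) else 0) :=
    Measurable.ite measurableSet_Iio measurable_const measurable_const
  have hchi_int : Integrable (fun ω => if v2 ω < u then (1:ℝ) else 0) μ := by
    refine (integrable_const (1:ℝ)).mono'
      ((hchi_meas.comp hm2).aestronglyMeasurable) (ae_of_all _ fun ω => ?_)
    by_cases h : v2 ω < u <;> simp [h]
  have hphi_meas : Measurable (fun x : ℝ => if u ≤ x then x else 0) :=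
    Measurable.ite (measurableSet_le measurable_const measurable_id) measurable_id measurable_const
  have hindep2 : IndepFun (fun ω => if v2 ω < u then (1:ℝ) else 0)
      (fun ω => if u ≤ v1 ω then v1 ω else 0) μ :=
    ((hindep.comp hphi_meas hchi_meas)).symm
  have hchi_val : (∫ ω, (if v2 ω < u then (1:ℝ) else 0) ∂μ) = F u := by
    have h0 : (fun ω => if v2 ω < u then (1:ℝ) else 0)
        = Set.indicator {ω | v2 ω < u} (fun _ => (1:ℝ)) := by
      ext ω; rw [Set.indicator_apply]; rfl
    rw [h0, integral_indicator_const (1:ℝ) (measurableSet_lt hm2 measurable_const),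
      smul_eq_mul, mul_one]
    have : μ {ω | v2 ω < u} = μ {ω | v1 ω < u} :=
      (hid.measure_mem_eq measurableSet_Iio).symm
    rw [measureReal_def, this, hFlt, ENNReal.toReal_ofReal (hF0 u)]
  have hM : (∫ ω, max ((if u ≤ v1 ω then v1 ω else 0) - (if u ≤ v2 ω then v2 ω else 0)) 0 ∂μ)
      = F u * (∫ ω, (if u ≤ v1 ω then v1 ω else 0) ∂μ)
        + ∫ ω, (if u ≤ v2 ω then max ((if u ≤ v1 ω then v1 ω else 0) - v2 ω) 0 else 0) ∂μ := by
    have hpt : ∀ ω, max ((if u ≤ v1 ω then v1 ω else 0) - (if u ≤ v2 ω then v2 ω else 0)) 0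
        = (if v2 ω < u then (1:ℝ) else 0) * (if u ≤ v1 ω then v1 ω else 0)
          + (if u ≤ v2 ω then max ((if u ≤ v1 ω then v1 ω else 0) - v2 ω) 0 else 0) := by
      intro ω
      by_cases h : u ≤ v2 ω
      · rw [if_pos h, if_neg (not_lt.2 h), if_pos h, zero_mul, zero_add]
      · rw [if_neg h, if_pos (not_le.1 h), if_neg h, sub_zero, one_mul, add_zero]
        exact max_eq_left (hXnn ω)
    have hprod_int : Integrable (fun ω =>
        (if v2 ω < u then (1:ℝ) else 0) * (if u ≤ v1 ω then v1 ω else 0)) μ := by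
      refine hXint.bdd_mul (c := 1) ((hchi_meas.comp hm2).aestronglyMeasurable) (ae_of_all _ fun ω => ?_)
      by_cases h : v2 ω < u <;> simp [h]
    rw [integral_congr_ae (ae_of_all _ hpt), integral_add hprod_int hhint]
    congr 1
    have := hindep2.integral_mul_eq_mul_integral hchi_int.aestronglyMeasurable hXint.aestronglyMeasurable
    rw [show (fun ω => (if v2 ω < u then (1:ℝ) else 0) * (if u ≤ v1 ω then v1 ω else 0))
        = (fun ω => if v2 ω < u then (1:ℝ) else 0) * (fun ω => if u ≤ v1 ω then v1 ω else 0)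
      from rfl, this, hchi_val]
  -- Tonelli computation of the joint term
  have hJ : (∫ ω, (if u ≤ v2 ω then max ((if u ≤ v1 ω then v1 ω else 0) - v2 ω) 0 else 0) ∂μ)
      = ∫ t in Ioi u, (1 - F t) * (F t - F u) := by
    set E : Set (Ω × ℝ) :=
      {p : Ω × ℝ | (u ≤ v2 p.1 ∧ v2 p.1 < p.2) ∧ (u ≤ v1 p.1 ∧ p.2 ≤ v1 p.1)} with hEdef
    have hEmeas : MeasurableSet E := by
      apply MeasurableSet.inter
      · exact (measurableSet_le measurable_const (hm2.comp measurable_fst)).inter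
          (measurableSet_lt (hm2.comp measurable_fst) measurable_snd)
      · exact (measurableSet_le measurable_const (hm1.comp measurable_fst)).inter
          (measurableSet_le measurable_snd (hm1.comp measurable_fst))
    -- sections in ω
    have hsec1 : ∀ ω, volume (Prod.mk ω ⁻¹' E)
        = ENNReal.ofReal (if u ≤ v2 ω then max ((if u ≤ v1 ω then v1 ω else 0) - v2 ω) 0 else 0) := by
      intro ω
      by_cases h2 : u ≤ v2 ω
      · by_cases hv : u ≤ v1 ω
        · have : Prod.mk ω ⁻¹' E = Ioc (v2 ω) (v1 ω) := by
            ext s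
            simp only [hEdef, mem_preimage, mem_setOf_eq, mem_Ioc, h2, hv, true_and, and_true]
          rw [this, Real.volume_Ioc, if_pos h2, if_pos hv]
          rcases le_or_gt (v1 ω - v2 ω) 0 with h | h
          · rw [max_eq_right h, ENNReal.ofReal_zero, ENNReal.ofReal_eq_zero.2 h]
          · rw [max_eq_left h.le]
        · have : Prod.mk ω ⁻¹' E = ∅ := by
            ext s
            simp only [hEdef, mem_preimage, mem_setOf_eq, mem_empty_iff_false, iff_false]
            rintro ⟨-, hb, -⟩; exact hv hb
          rw [this, measure_empty, if_pos h2, if_neg hv]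
          rw [Eq.comm, ENNReal.ofReal_eq_zero]
          exact max_le (by linarith [hpos2 ω]) le_rfl
      · have : Prod.mk ω ⁻¹' E = ∅ := by
          ext s
          simp only [hEdef, mem_preimage, mem_setOf_eq, mem_empty_iff_false, iff_false]
          rintro ⟨⟨hb, -⟩, -⟩; exact h2 hb
        rw [this, measure_empty, if_neg h2, ENNReal.ofReal_zero]
    -- sections in s
    have hsec2 : ∀ s : ℝ, μ {ω | (ω, s) ∈ E}
        = if u < s then ENNReal.ofReal ((1 - F s) * (F s - F u)) else 0 := by
      intro s
      rcases le_or_gt s u with h | h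
      · rw [if_neg (not_lt.2 h)]
        have : {ω | (ω, s) ∈ E} = ∅ := by
          ext ω
          simp only [hEdef, mem_setOf_eq, mem_empty_iff_false, iff_false]
          rintro ⟨⟨hb1, hb2⟩, -⟩; linarith
        rw [this, measure_empty]
      · rw [if_pos h]
        have hsplit : {ω | (ω, s) ∈ E}
            = (v1 ⁻¹' {x | u ≤ x ∧ s ≤ x}) ∩ (v2 ⁻¹' {x | u ≤ x ∧ x < s}) := by
          ext ω
          simp only [hEdef, mem_setOf_eq, mem_inter_iff, mem_preimage]
          tauto
        have hm1set : MeasurableSet {x : ℝ | u ≤ x ∧ s ≤ x} :=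
          (measurableSet_le measurable_const measurable_id).inter
            (measurableSet_le measurable_const measurable_id)
        have hm2set : MeasurableSet {x : ℝ | u ≤ x ∧ x < s} :=
          (measurableSet_le measurable_const measurable_id).inter measurableSet_Iio
        rw [hsplit, hindep.measure_inter_preimage_eq_mul _ _ hm1set hm2set]
        -- first factor
        have hfac1 : μ (v1 ⁻¹' {x | u ≤ x ∧ s ≤ x}) = ENNReal.ofReal (1 - F s) := by
          have hset1 : v1 ⁻¹' {x | u ≤ x ∧ s ≤ x} = {ω | v1 ω < s}ᶜ := by
            ext ω
            simp only [mem_preimage, mem_setOf_eq, mem_compl_iff, not_lt]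
            exact ⟨fun hh => hh.2, fun hh => ⟨le_trans h.le hh, hh⟩⟩
          rw [hset1, measure_compl (measurableSet_lt hm1 measurable_const) (measure_ne_top μ _),
            hFlt, measure_univ, show (1:ℝ≥0∞) = ENNReal.ofReal (1:ℝ) by simp,
            ← ENNReal.ofReal_sub _ (hF0 s)]
        -- second factor
        have hfac2 : μ (v2 ⁻¹' {x | u ≤ x ∧ x < s}) = ENNReal.ofReal (F s - F u) := by
          have hid2 : μ (v2 ⁻¹' {x | u ≤ x ∧ x < s}) = μ (v1 ⁻¹' {x | u ≤ x ∧ x < s}) :=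
            (hid.measure_mem_eq hm2set).symm
          have hset : v1 ⁻¹' {x | u ≤ x ∧ x < s} = {ω | v1 ω < s} \ {ω | v1 ω < u} := by
            ext ω
            simp only [mem_preimage, mem_setOf_eq, mem_diff, not_lt]
            tauto
          rw [hid2, hset,
            show μ ({ω | v1 ω < s} \ {ω | v1 ω < u})
                = μ {ω | v1 ω < s} - μ {ω | v1 ω < u} from
              measure_diff (fun ω (hh : v1 ω < u) => lt_of_lt_of_le hh h.le)
                ((measurableSet_lt hm1 measurable_const).nullMeasurableSet) (measure_ne_top μ _),
            hFlt, hFlt, ENNReal.ofReal_sub _ (hF0 u)]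
        rw [hfac1, hfac2, ← ENNReal.ofReal_mul (by linarith [hF1 s])]
    -- put it together with the product measure
    have hprod1 : (μ.prod volume) E = ∫⁻ ω, ENNReal.ofReal
        (if u ≤ v2 ω then max ((if u ≤ v1 ω then v1 ω else 0) - v2 ω) 0 else 0) ∂μ := by
      rw [Measure.prod_apply hEmeas]
      exact lintegral_congr fun ω => hsec1 ω
    have hprod2 : (μ.prod volume) E
        = ∫⁻ s in Ioi u, ENNReal.ofReal ((1 - F s) * (F s - F u)) := by
      rw [Measure.prod_apply_symm hEmeas]
      have hfun : (fun y : ℝ => μ ((fun x => (x, y)) ⁻¹' E))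
          = Set.indicator (Ioi u) (fun s => ENNReal.ofReal ((1 - F s) * (F s - F u))) := by
        ext s
        rw [show (fun x => (x, s)) ⁻¹' E = {ω | (ω, s) ∈ E} from rfl, hsec2 s,
          Set.indicator_apply]
        simp only [mem_Ioi]
      rw [hfun, lintegral_indicator measurableSet_Ioi]
    have hptnn : ∀ ω, (0:ℝ) ≤
        (if u ≤ v2 ω then max ((if u ≤ v1 ω then v1 ω else 0) - v2 ω) 0 else 0) := by
      intro ω
      by_cases h : u ≤ v2 ω
      · simp only [if_pos h]; exact le_max_right _ _
      · simp only [if_neg h]; exact le_rfl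
    have hnnJ : 0 ≤ᵐ[μ] fun ω =>
        (if u ≤ v2 ω then max ((if u ≤ v1 ω then v1 ω else 0) - v2 ω) 0 else 0) :=
      ae_of_all _ fun ω => hptnn ω
    have hrhsnn : 0 ≤ᵐ[volume.restrict (Ioi u)] fun t => (1 - F t) * (F t - F u) := by
      filter_upwards [ae_restrict_mem measurableSet_Ioi] with t ht
      have ha : F u ≤ F t := hFmono (le_of_lt (mem_Ioi.1 ht))
      have hb := hF1 t
      simp only [Pi.zero_apply]
      nlinarith
    have hlhs := ofReal_integral_eq_lintegral_ofReal hhint hnnJ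
    have hrhs := ofReal_integral_eq_lintegral_ofReal hJ_int hrhsnn
    apply (ENNReal.ofReal_eq_ofReal_iff (integral_nonneg (fun ω => hptnn ω))
      (setIntegral_nonneg measurableSet_Ioi (fun t ht => by
        have ha : F u ≤ F t := hFmono (le_of_lt (mem_Ioi.1 ht))
        have hb := hF1 t
        nlinarith))).1
    rw [hlhs, hrhs, ← hprod1, hprod2]
  -- F tends to 1 at infinity
  have hFn1 : Tendsto (fun n : ℕ => F (n:ℝ)) atTop (𝓝 1) := by
    have hmonoS : Monotone (fun n : ℕ => {ω | v1 ω ≤ (n:ℝ)}) := by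
      intro m n hmn ω (h : v1 ω ≤ _)
      exact h.trans (by exact_mod_cast Nat.cast_le.2 hmn)
    have htm := tendsto_measure_iUnion_atTop (μ := μ) hmonoS
    have huniv : (⋃ n : ℕ, {ω | v1 ω ≤ (n:ℝ)}) = univ := by
      ext ω
      simp only [mem_iUnion, mem_setOf_eq, mem_univ, iff_true]
      obtain ⟨n, hn⟩ := exists_nat_ge (v1 ω)
      exact ⟨n, hn⟩
    rw [huniv, measure_univ] at htm
    have := (ENNReal.tendsto_toReal (by norm_num : (1:ℝ≥0∞) ≠ ⊤)).comp htm
    simp only [Function.comp, ENNReal.toReal_one] at this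
    refine this.congr fun n => ?_
    exact (hF _).symm
  -- nonnegativity of f and G
  have hf_nn : ∀ x, 0 < x → 0 ≤ f x := fun x hx =>
    deriv_nonneg_of_monotone hFmono (hderiv x hx)
  have hGderiv : ∀ x : ℝ, HasDerivAt (fun v => ∫ t in (0:ℝ)..v, F t) (F x) x := fun x =>
    (hcont.integral_hasStrictDerivAt 0 x).hasDerivAt
  have hGcont : Continuous (fun v => ∫ t in (0:ℝ)..v, F t) :=
    continuous_iff_continuousAt.2 fun x => (hGderiv x).continuousAt
  have hGnn : ∀ v, u ≤ v → 0 ≤ ∫ t in (0:ℝ)..v, F t := fun v hv =>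
    intervalIntegral.integral_nonneg (by linarith) (fun t _ => hF0 t)
  -- integration by parts on [u, R]
  have hparts : ∀ R : ℝ, u ≤ R →
      (∫ x in u..R, (∫ t in (0:ℝ)..x, F t) * f x)
        = (∫ t in (0:ℝ)..u, F t) * (F R - F u)
          + ∫ x in u..R, F x * (F R - F x) := by
    intro R hR
    have hfi : IntervalIntegrable f volume u R :=
      intervalIntegrable_of_deriv hcont hFmono hF1 hF0 hderiv hu0 hR
    have hGfi : IntervalIntegrable (fun x => (∫ t in (0:ℝ)..x, F t) * f x) volume u R :=
      hfi.continuousOn_mul hGcont.continuousOn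
    have hF2i : IntervalIntegrable (fun x => F x ^ 2) volume u R :=
      (hcont.pow 2).intervalIntegrable _ _
    have hD : ∀ x ∈ uIcc u R, HasDerivAt (fun y => (∫ t in (0:ℝ)..y, F t) * F y)
        (F x ^ 2 + (∫ t in (0:ℝ)..x, F t) * f x) x := by
      intro x hx
      rw [uIcc_of_le hR] at hx
      have hx0 : 0 < x := lt_of_lt_of_le hu0 hx.1
      have : HasDerivAt (fun y => (∫ t in (0:ℝ)..y, F t) * F y) _ x := (hGderiv x).mul (hderiv x hx0)
      convert this using 1
      ring
    have hFTC := intervalIntegral.integral_eq_sub_of_hasDerivAt hD (hF2i.add hGfi)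
    rw [intervalIntegral.integral_add hF2i hGfi] at hFTC
    have hGR : (∫ t in (0:ℝ)..R, F t)
        = (∫ t in (0:ℝ)..u, F t) + ∫ t in u..R, F t := by
      rw [intervalIntegral.integral_add_adjacent_intervals (hcont.intervalIntegrable _ _)
        (hcont.intervalIntegrable _ _)]
    have hmix : (∫ x in u..R, F x * (F R - F x))
        = F R * (∫ x in u..R, F x) - ∫ x in u..R, F x ^ 2 := by
      have : (∫ x in u..R, F x * (F R - F x))
          = ∫ x in u..R, (F R * F x - F x ^ 2) := by
        apply intervalIntegral.integral_congr
        intro x _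
        ring
      rw [this, intervalIntegral.integral_sub
          ((hcont.intervalIntegrable _ _).const_mul _) hF2i,
        intervalIntegral.integral_const_mul]
    rw [hGR] at hFTC
    rw [hmix]
    linear_combination hFTC
  -- convergence of the mixed term via dominated convergence
  have hKlim : Tendsto (fun n : ℕ => ∫ x in u..(n:ℝ), F x * (F (n:ℝ) - F x)) atTop
      (𝓝 (∫ t in Ioi u, F t * (1 - F t))) := by
    have hDCT := MeasureTheory.tendsto_integral_of_dominated_convergence
      (μ := volume.restrict (Ioi u))
      (F := fun (n : ℕ) x => Set.indicator (Ioc u (n:ℝ)) (fun y => F y * (F (n:ℝ) - F y)) x)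
      (f := fun x => F x * (1 - F x)) (bound := fun x => 1 - F x)
      (fun n => ((hcont.mul (continuous_const.sub hcont)).aestronglyMeasurable.indicator
        measurableSet_Ioc).restrict)
      hT_int
      (fun n => ae_of_all _ fun x => by
        show ‖Set.indicator (Ioc u (n:ℝ)) (fun y => F y * (F (n:ℝ) - F y)) x‖ ≤ 1 - F x
        by_cases hx : x ∈ Ioc u (n:ℝ)
        · rw [Set.indicator_of_mem hx]
          have h1 : F x ≤ F (n:ℝ) := hFmono hx.2
          have h2 := hF1 (n:ℝ)
          have h3 := hF0 x
          have h4 := hF1 x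
          rw [Real.norm_eq_abs, abs_of_nonneg (by nlinarith)]
          nlinarith
        · rw [Set.indicator_of_notMem hx, norm_zero]
          linarith [hF1 x])
      (by
        filter_upwards [ae_restrict_mem measurableSet_Ioi] with x hx
        show Tendsto (fun n : ℕ => Set.indicator (Ioc u (n:ℝ))
          (fun y => F y * (F (n:ℝ) - F y)) x) atTop (𝓝 (F x * (1 - F x)))
        have hev : ∀ᶠ n : ℕ in atTop, Set.indicator (Ioc u (n:ℝ))
            (fun y => F y * (F (n:ℝ) - F y)) x = F x * (F (n:ℝ) - F x) := by
          obtain ⟨N, hN⟩ := exists_nat_ge x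
          filter_upwards [eventually_ge_atTop N] with n hn
          have : x ∈ Ioc u (n:ℝ) := ⟨mem_Ioi.1 hx, hN.trans (by exact_mod_cast Nat.cast_le.2 hn)⟩
          rw [Set.indicator_of_mem this]
        have hlim : Tendsto (fun n : ℕ => F x * (F (n:ℝ) - F x)) atTop
            (𝓝 (F x * (1 - F x))) := by
          exact (tendsto_const_nhds.mul (hFn1.sub tendsto_const_nhds))
        exact Tendsto.congr' (hev.mono fun n h => h.symm) hlim)
    refine Tendsto.congr' ?_ hDCT
    obtain ⟨N, hN⟩ := exists_nat_ge u
    filter_upwards [eventually_ge_atTop N] with n hn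
    have h : u ≤ (n:ℝ) := hN.trans (by exact_mod_cast Nat.cast_le.2 hn)
    show (∫ x in Ioi u, Set.indicator (Ioc u (n:ℝ)) (fun y => F y * (F (n:ℝ) - F y)) x)
        = ∫ x in u..(n:ℝ), F x * (F (n:ℝ) - F x)
    rw [integral_indicator measurableSet_Ioc, Measure.restrict_restrict measurableSet_Ioc,
      inter_eq_left.2 Ioc_subset_Ioi_self, intervalIntegral.integral_of_le h]
  -- full limit of the interval integrals
  have htendC : Tendsto (fun n : ℕ => ∫ x in u..(n:ℝ), (∫ t in (0:ℝ)..x, F t) * f x) atTop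
      (𝓝 ((∫ t in (0:ℝ)..u, F t) * (1 - F u) + ∫ t in Ioi u, F t * (1 - F t))) := by
    have hev : ∀ᶠ n : ℕ in atTop,
        (∫ t in (0:ℝ)..u, F t) * (F (n:ℝ) - F u) + (∫ x in u..(n:ℝ), F x * (F (n:ℝ) - F x))
          = ∫ x in u..(n:ℝ), (∫ t in (0:ℝ)..x, F t) * f x := by
      obtain ⟨N, hN⟩ := exists_nat_ge u
      filter_upwards [eventually_ge_atTop N] with n hn
      exact (hparts (n:ℝ) (hN.trans (by exact_mod_cast Nat.cast_le.2 hn))).symm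
    have hlim : Tendsto (fun n : ℕ =>
        (∫ t in (0:ℝ)..u, F t) * (F (n:ℝ) - F u) + (∫ x in u..(n:ℝ), F x * (F (n:ℝ) - F x)))
        atTop (𝓝 ((∫ t in (0:ℝ)..u, F t) * (1 - F u) + ∫ t in Ioi u, F t * (1 - F t))) :=
      (tendsto_const_nhds.mul (hFn1.sub tendsto_const_nhds)).add hKlim
    exact Tendsto.congr' hev hlim
  -- integrability on Ioi u and identification of the integral
  have hIoc_int : ∀ n : ℕ, IntegrableOn (fun x => (∫ t in (0:ℝ)..x, F t) * f x) (Ioc u (n:ℝ)) := by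
    intro n
    rcases le_or_gt u (n:ℝ) with h | h
    · have hfi : IntervalIntegrable f volume u (n:ℝ) :=
        intervalIntegrable_of_deriv hcont hFmono hF1 hF0 hderiv hu0 h
      have := hfi.continuousOn_mul hGcont.continuousOn
      rw [intervalIntegrable_iff_integrableOn_Ioc_of_le h] at this
      exact this
    · rw [Ioc_eq_empty (not_lt.2 h.le)]
      exact integrableOn_empty
  have hnorm_eq : ∀ᶠ n : ℕ in atTop, (∫ x in u..(n:ℝ), (∫ t in (0:ℝ)..x, F t) * f x)
      = ∫ x in u..(n:ℝ), ‖(∫ t in (0:ℝ)..x, F t) * f x‖ := by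
    obtain ⟨N, hN⟩ := exists_nat_ge u
    filter_upwards [eventually_ge_atTop N] with n hn
    have h : u ≤ (n:ℝ) := hN.trans (by exact_mod_cast Nat.cast_le.2 hn)
    apply intervalIntegral.integral_congr
    intro x hx
    rw [uIcc_of_le h] at hx
    have hx0 : 0 < x := lt_of_lt_of_le hu0 hx.1
    exact (Real.norm_of_nonneg (mul_nonneg (hGnn x hx.1) (hf_nn x hx0))).symm
  have hIoi_int : IntegrableOn (fun x => (∫ t in (0:ℝ)..x, F t) * f x) (Ioi u) := by
    refine integrableOn_Ioi_of_intervalIntegral_norm_tendsto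
      ((∫ t in (0:ℝ)..u, F t) * (1 - F u) + ∫ t in Ioi u, F t * (1 - F t)) u
      hIoc_int tendsto_natCast_atTop_atTop ?_
    exact Tendsto.congr' hnorm_eq htendC
  have hIval : (∫ v in Set.Ioi u, (∫ x in (0:ℝ)..v, F x) * f v)
      = (∫ t in (0:ℝ)..u, F t) * (1 - F u) + ∫ t in Ioi u, F t * (1 - F t) := by
    have := intervalIntegral_tendsto_integral_Ioi u hIoi_int tendsto_natCast_atTop_atTop
    exact tendsto_nhds_unique this htendC
  -- final assembly
  rw [hIval, hM, hEX, hJ, hKJ, hAL, hGu]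
  ring

theorem bob_profit_with_reserve
    {Ω : Type*} [MeasurableSpace Ω] (μ : Measure Ω) [IsProbabilityMeasure μ]
    (v1 v2 : Ω → ℝ)
    (h1 : Integrable v1 μ) (h2 : Integrable v2 μ)
    (hpos1 : ∀ ω, 0 ≤ v1 ω) (hpos2 : ∀ ω, 0 ≤ v2 ω)
    (hindep : IndepFun v1 v2 μ) (hid : IdentDistrib v1 v2 μ μ)
    (F f : ℝ → ℝ) (hF : ∀ x, F x = (μ {ω | v1 ω ≤ x}).toReal)
    (hcont : Continuous F) (hmono : StrictMonoOn F (Set.Ioi 0))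
    (hderiv : ∀ x > 0, HasDerivAt F (f x) x)
    (L u : ℝ) (hL : 0 < L) (hLm : L < ∫ ω, v1 ω ∂μ) (huL : L < u)
    (hudef : ∫ ω in {ω | v1 ω < u}, v1 ω ∂μ = L * F u) :
    (∫ v in Set.Ioi u, (∫ x in (0:ℝ)..v, F x) * f v)
      + ((∫ ω in {ω | L < v1 ω ∧ v1 ω < u}, v1 ω ∂μ) - L * (F u - F L)) * F u
    = (∫ ω, max ((if u ≤ v1 ω then v1 ω else 0) - (if u ≤ v2 ω then v2 ω else 0)) 0 ∂μ)
      + F u * (∫ ω in {ω | L < v1 ω ∧ v1 ω < u}, (v1 ω - L) ∂μ)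
      - (1 - F u) * L * F u := by
  have hsm1 := h1.aestronglyMeasurable
  have hsm2 := h2.aestronglyMeasurable
  set g1 : Ω → ℝ := fun ω => max (hsm1.mk v1 ω) 0 with hg1def
  set g2 : Ω → ℝ := fun ω => max (hsm2.mk v2 ω) 0 with hg2def
  have hmg1 : Measurable g1 := hsm1.stronglyMeasurable_mk.measurable.max measurable_const
  have hmg2 : Measurable g2 := hsm2.stronglyMeasurable_mk.measurable.max measurable_const
  have heq1 : v1 =ᵐ[μ] g1 := by
    filter_upwards [hsm1.ae_eq_mk] with ω h
    rw [hg1def]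
    simp only []
    rw [← h, max_eq_left (hpos1 ω)]
  have heq2 : v2 =ᵐ[μ] g2 := by
    filter_upwards [hsm2.ae_eq_mk] with ω h
    rw [hg2def]
    simp only []
    rw [← h, max_eq_left (hpos2 ω)]
  have hg1int : Integrable g1 μ := h1.congr heq1
  have hg2int : Integrable g2 μ := h2.congr heq2
  have hg1pos : ∀ ω, 0 ≤ g1 ω := fun ω => le_max_right _ _
  have hg2pos : ∀ ω, 0 ≤ g2 ω := fun ω => le_max_right _ _
  have hindep' : IndepFun g1 g2 μ := hindep.congr heq1 heq2
  have hid' : IdentDistrib g1 g2 μ μ :=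
    ((IdentDistrib.of_ae_eq h1.aemeasurable heq1).symm.trans hid).trans
      (IdentDistrib.of_ae_eq h2.aemeasurable heq2)
  have hF' : ∀ x, F x = (μ {ω | g1 ω ≤ x}).toReal := by
    intro x
    rw [hF x]
    congr 1
    apply measure_congr
    rw [eventuallyEq_set]
    filter_upwards [heq1] with ω h
    simp only [mem_setOf_eq, h]
  have hres1 : μ.restrict {ω | v1 ω < u} = μ.restrict {ω | g1 ω < u} := by
    apply Measure.restrict_congr_set
    rw [eventuallyEq_set]
    filter_upwards [heq1] with ω h
    simp only [mem_setOf_eq, h]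
  have hresS : μ.restrict {ω | L < v1 ω ∧ v1 ω < u}
      = μ.restrict {ω | L < g1 ω ∧ g1 ω < u} := by
    apply Measure.restrict_congr_set
    rw [eventuallyEq_set]
    filter_upwards [heq1] with ω h
    simp only [mem_setOf_eq, h]
  have hudef' : ∫ ω in {ω | g1 ω < u}, g1 ω ∂μ = L * F u := by
    rw [← hudef, ← hres1]
    exact integral_congr_ae (ae_restrict_of_ae heq1.symm)
  have hkey := key μ g1 g2 hmg1 hmg2 hg1int hg2int hg1pos hg2pos hindep' hid'
    F f hF' hcont hderiv L u hL huL hudef'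
  have e1 : (∫ ω in {ω | L < v1 ω ∧ v1 ω < u}, v1 ω ∂μ)
      = ∫ ω in {ω | L < g1 ω ∧ g1 ω < u}, g1 ω ∂μ := by
    rw [← hresS]
    exact integral_congr_ae (ae_restrict_of_ae heq1)
  have e2 : (∫ ω in {ω | L < v1 ω ∧ v1 ω < u}, (v1 ω - L) ∂μ)
      = ∫ ω in {ω | L < g1 ω ∧ g1 ω < u}, (g1 ω - L) ∂μ := by
    rw [← hresS]
    exact integral_congr_ae (ae_restrict_of_ae (by
      filter_upwards [heq1] with ω h
      rw [h]))
  have e3 : (∫ ω, max ((if u ≤ v1 ω then v1 ω else 0) - (if u ≤ v2 ω then v2 ω else 0)) 0 ∂μ)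
      = ∫ ω, max ((if u ≤ g1 ω then g1 ω else 0) - (if u ≤ g2 ω then g2 ω else 0)) 0 ∂μ := by
    apply integral_congr_ae
    filter_upwards [heq1, heq2] with ω ha hb
    rw [ha, hb]
  rw [e1, e2, e3]
  exact hkey
end

section
/- Let v be nonnegative integrable with continuous strictly increasing CDF F, and let α ∈ (0,1) with α·E[v] < E[v]. Then there exists a unique v̄ in the support of F such that E[v·1{v < v̄}] = α·E[v], and the function β(x) = E[v | v < x] - α·E[v]/F(x) satisfies β(v̄) = 0 and β(x) > 0 for x > v̄. -/
open MeasureTheory ProbabilityTheory Filter Topology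

theorem uncertain_timing_cutoff_aux
    {Ω : Type*} [MeasurableSpace Ω] (μ : Measure Ω) [IsProbabilityMeasure μ]
    (v : Ω → ℝ) (hmeas : Measurable v) (hv : Integrable v μ) (hpos : ∀ ω, 0 ≤ v ω)
    (F : ℝ → ℝ) (hF : ∀ x, F x = (μ {ω | v ω ≤ x}).toReal)
    (hcont : Continuous F) (hmono : StrictMonoOn F (Set.Ioi 0))
    (α : ℝ) (hα : 0 < α) (hα1 : α < 1)
    (hmean : 0 < ∫ ω, v ω ∂μ) :
    (∃! u : ℝ, 0 < F u ∧
        ∫ ω in {ω | v ω < u}, v ω ∂μ = α * ∫ ω, v ω ∂μ)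
    ∧ ∀ u : ℝ,
        (0 < F u ∧ ∫ ω in {ω | v ω < u}, v ω ∂μ = α * ∫ ω, v ω ∂μ) →
        ((∫ ω in {ω | v ω < u}, v ω ∂μ) / F u - α * (∫ ω, v ω ∂μ) / F u = 0
          ∧ ∀ x > u,
            0 < (∫ ω in {ω | v ω < x}, v ω ∂μ) / F x - α * (∫ ω, v ω ∂μ) / F x) := by
  set E : ℝ := ∫ ω, v ω ∂μ with hE
  set G : ℝ → ℝ := fun x => ∫ ω in {ω | v ω < x}, v ω ∂μ with hGdef
  have hSm : ∀ x : ℝ, MeasurableSet {ω | v ω < x} := fun x => hmeas measurableSet_Iio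
  have hTm : ∀ x : ℝ, MeasurableSet {ω | v ω ≤ x} := fun x => hmeas measurableSet_Iic
  have hαE : 0 < α * E := mul_pos hα hmean
  -- G is monotone
  have hGmono : Monotone G := by
    intro a b hab
    exact setIntegral_mono_set hv.integrableOn
      (Eventually.of_forall fun ω => hpos ω)
      (HasSubset.Subset.eventuallyLE fun ω (h : v ω < a) => lt_of_lt_of_le h hab)
  -- G 0 = 0
  have hS0 : {ω | v ω < (0:ℝ)} = ∅ := by
    ext ω; simp [not_lt.mpr (hpos ω)]
  have hG0 : G 0 = 0 := by
    simp only [hGdef, hS0, Measure.restrict_empty, integral_zero_measure]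
  -- no atoms
  have hatom : ∀ x : ℝ, μ {ω | v ω = x} = 0 := by
    intro x
    have key : ∀ n : ℕ, (μ {ω | v ω = x}).toReal ≤ F x - F (x - 1/(n+1)) := by
      intro n
      have hn : (0:ℝ) < 1/(n+1) := by positivity
      have hsub : {ω | v ω ≤ x - 1/(n+1)} ⊆ {ω | v ω ≤ x} := by
        intro ω h
        simp only [Set.mem_setOf_eq] at h ⊢
        linarith
      have hsingle : {ω | v ω = x} ⊆ {ω | v ω ≤ x} \ {ω | v ω ≤ x - 1/(n+1)} := by
        intro ω h
        exact ⟨le_of_eq h, by simp only [Set.mem_setOf_eq] at h ⊢; linarith⟩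
      have hdiff : μ ({ω | v ω ≤ x} \ {ω | v ω ≤ x - 1/(n+1)}) =
          μ {ω | v ω ≤ x} - μ {ω | v ω ≤ x - 1/(n+1)} :=
        measure_diff hsub (hTm _).nullMeasurableSet (measure_ne_top μ _)
      calc (μ {ω | v ω = x}).toReal
          ≤ (μ ({ω | v ω ≤ x} \ {ω | v ω ≤ x - 1/(n+1)})).toReal := by
            exact ENNReal.toReal_mono (measure_ne_top μ _) (measure_mono hsingle)
        _ = F x - F (x - 1/(n+1)) := by
            rw [hdiff, ENNReal.toReal_sub_of_le (measure_mono hsub) (measure_ne_top μ _),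
              hF, hF]
    have hlim : Tendsto (fun n : ℕ => F x - F (x - 1/(n+1))) atTop (𝓝 0) := by
      have h1 : Tendsto (fun n : ℕ => x - 1/((n:ℝ)+1)) atTop (𝓝 x) := by
        have := tendsto_one_div_add_atTop_nhds_zero_nat (𝕜 := ℝ)
        simpa using tendsto_const_nhds.sub this
      have h2 := (hcont.tendsto x).comp h1
      have h3 : Tendsto (fun n : ℕ => F x - F (x - 1/(n+1))) atTop (𝓝 (F x - F x)) :=
        Tendsto.sub tendsto_const_nhds h2
      simpa using h3
    have h0 : (μ {ω | v ω = x}).toReal ≤ 0 := ge_of_tendsto' hlim key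
    have h0' : (μ {ω | v ω = x}).toReal = 0 := le_antisymm h0 ENNReal.toReal_nonneg
    rcases (ENNReal.toReal_eq_zero_iff _).mp h0' with h | h
    · exact h
    · exact absurd h (measure_ne_top μ _)
  -- G is continuous
  have hGcont : Continuous G := by
    rw [continuous_iff_seqContinuous]
    intro xs x hxs
    have hind : ∀ y : ℝ, G y = ∫ ω, Set.indicator {ω | v ω < y} v ω ∂μ :=
      fun y => (integral_indicator (hSm y)).symm
    simp only [Function.comp_def, hind]
    apply tendsto_integral_of_dominated_convergence (fun ω => |v ω|)
    · intro n; exact hv.aestronglyMeasurable.indicator (hSm _)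
    · exact hv.abs
    · intro n
      filter_upwards with ω
      calc ‖Set.indicator {ω | v ω < xs n} v ω‖ ≤ ‖v ω‖ := norm_indicator_le_norm_self _ _
        _ = |v ω| := Real.norm_eq_abs _
    · have hne : ∀ᵐ ω ∂μ, v ω ≠ x := by
        rw [ae_iff]
        simpa using hatom x
      filter_upwards [hne] with ω hω
      rcases lt_or_gt_of_ne hω with h | h
      · have hev : ∀ᶠ n in atTop, Set.indicator {ω' | v ω' < xs n} v ω = v ω := by
          filter_upwards [hxs.eventually (eventually_gt_nhds h)] with n hn
          exact Set.indicator_of_mem (show ω ∈ {ω' | v ω' < xs n} from hn) v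
        have heq : Set.indicator {ω' | v ω' < x} v ω = v ω :=
          Set.indicator_of_mem (show ω ∈ {ω' | v ω' < x} from h) v
        rw [heq]
        exact Tendsto.congr' (hev.mono fun n h => h.symm) tendsto_const_nhds
      · have hev : ∀ᶠ n in atTop, Set.indicator {ω' | v ω' < xs n} v ω = 0 := by
          filter_upwards [hxs.eventually (eventually_lt_nhds h)] with n hn
          exact Set.indicator_of_notMem (show ω ∉ {ω' | v ω' < xs n} from not_lt.mpr hn.le) v
        have heq : Set.indicator {ω' | v ω' < x} v ω = 0 :=
          Set.indicator_of_notMem (show ω ∉ {ω' | v ω' < x} from not_lt.mpr h.le) v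
        rw [heq]
        exact Tendsto.congr' (hev.mono fun n h => h.symm) tendsto_const_nhds
  -- G tends to E : find M with α * E < G M
  have hM : ∃ M : ℝ, α * E < G M := by
    have hsetsmeas : ∀ n : ℕ, MeasurableSet {ω | v ω < (n:ℝ)} := fun n => hSm _
    have hsets : Monotone (fun n : ℕ => {ω | v ω < (n:ℝ)}) := by
      intro a b hab ω (h : v ω < a)
      exact lt_of_lt_of_le h (by exact_mod_cast hab)
    have hunion : ⋃ n : ℕ, {ω | v ω < (n:ℝ)} = Set.univ := by
      ext ω
      simp only [Set.mem_iUnion, Set.mem_setOf_eq, Set.mem_univ, iff_true]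
      exact exists_nat_gt (v ω)
    have hten := tendsto_setIntegral_of_monotone hsetsmeas hsets
      (by rw [hunion]; exact hv.integrableOn)
    rw [hunion, setIntegral_univ] at hten
    have hlt : α * E < E := by nlinarith
    obtain ⟨n, hn⟩ := (hten.eventually (eventually_gt_nhds hlt)).exists
    exact ⟨n, hn⟩
  -- existence via IVT
  obtain ⟨M, hMlt⟩ := hM
  have hM0 : (0:ℝ) ≤ M := by
    by_contra h
    push_neg at h
    have := hGmono h.le
    rw [hG0] at this
    linarith
  have hmem : α * E ∈ Set.Icc (G 0) (G M) := ⟨by rw [hG0]; linarith, hMlt.le⟩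
  obtain ⟨u₀, _, hu₀⟩ := intermediate_value_Icc hM0 hGcont.continuousOn hmem
  -- any solution is positive
  have hupos : ∀ u : ℝ, G u = α * E → 0 < u := by
    intro u hu
    by_contra h
    push_neg at h
    have : G u ≤ G 0 := hGmono h
    rw [hG0] at this
    linarith
  -- F is positive at solutions
  have hFpos : ∀ u : ℝ, G u = α * E → 0 < F u := by
    intro u hu
    have hμS : μ {ω | v ω < u} ≠ 0 := by
      intro h
      have : G u = 0 := by
        simp only [hGdef, Measure.restrict_eq_zero.mpr h, integral_zero_measure]
      linarith
    have hle : μ {ω | v ω < u} ≤ μ {ω | v ω ≤ u} :=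
      measure_mono fun ω (h : v ω < u) => h.le
    rw [hF]
    exact ENNReal.toReal_pos (fun h => hμS (le_antisymm (h ▸ hle) zero_le))
      (measure_ne_top μ _)
  -- strict monotonicity above 0
  have hstrict : ∀ a b : ℝ, 0 < a → a < b → G a < G b := by
    intro a b ha hab
    set m := (a + b) / 2 with hm
    have ham : a < m := by simp only [hm]; linarith
    have hmb : m < b := by simp only [hm]; linarith
    set D := {ω | a < v ω ∧ v ω ≤ m} with hD
    have hDm : MeasurableSet D := (hmeas measurableSet_Ioc : MeasurableSet (v ⁻¹' Set.Ioc a m))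
    have hDdisj : Disjoint {ω | v ω < a} D := by
      rw [Set.disjoint_left]
      intro ω h1 h2
      exact absurd h2.1 (not_lt.mpr h1.le)
    have hDsub : {ω | v ω < a} ∪ D ⊆ {ω | v ω < b} := by
      rintro ω (h | h)
      · exact lt_trans h hab
      · exact lt_of_le_of_lt h.2 hmb
    have hDeq : D = {ω | v ω ≤ m} \ {ω | v ω ≤ a} := by
      ext ω
      simp only [hD, Set.mem_setOf_eq, Set.mem_diff, not_le]
      tauto
    have hsub2 : {ω | v ω ≤ a} ⊆ {ω | v ω ≤ m} := by
      intro ω h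
      simp only [Set.mem_setOf_eq] at h ⊢
      linarith
    have hd1 : μ ({ω | v ω ≤ m} \ {ω | v ω ≤ a}) = μ {ω | v ω ≤ m} - μ {ω | v ω ≤ a} :=
      measure_diff hsub2 (hTm a).nullMeasurableSet (measure_ne_top μ _)
    have hμD : 0 < (μ D).toReal := by
      rw [hDeq, hd1, ENNReal.toReal_sub_of_le (measure_mono hsub2) (measure_ne_top μ _)]
      have := hmono (Set.mem_Ioi.mpr ha) (Set.mem_Ioi.mpr (lt_trans ha ham)) ham
      rw [hF, hF] at this
      linarith
    have hIntD : a * (μ D).toReal ≤ ∫ ω in D, v ω ∂μ :=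
      setIntegral_ge_of_const_le_real hDm (measure_ne_top μ _) (fun ω h => h.1.le) hv.integrableOn
    have hsplit : ∫ ω in {ω | v ω < a} ∪ D, v ω ∂μ = G a + ∫ ω in D, v ω ∂μ :=
      setIntegral_union hDdisj hDm hv.integrableOn hv.integrableOn
    have hle : ∫ ω in {ω | v ω < a} ∪ D, v ω ∂μ ≤ G b :=
      setIntegral_mono_set hv.integrableOn (Eventually.of_forall fun ω => hpos ω)
        (HasSubset.Subset.eventuallyLE hDsub)
    have : 0 < a * (μ D).toReal := mul_pos ha hμD
    linarith
  -- uniqueness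
  have huniq : ∀ u₁ u₂ : ℝ, G u₁ = α * E → G u₂ = α * E → u₁ = u₂ := by
    intro u₁ u₂ h1 h2
    rcases lt_trichotomy u₁ u₂ with h | h | h
    · exact absurd (h2 ▸ h1 ▸ hstrict u₁ u₂ (hupos u₁ h1) h) (lt_irrefl _)
    · exact h
    · exact absurd (h1 ▸ h2 ▸ hstrict u₂ u₁ (hupos u₂ h2) h) (lt_irrefl _)
  constructor
  · refine ⟨u₀, ⟨hFpos u₀ hu₀, hu₀⟩, ?_⟩
    intro u ⟨_, hu⟩
    exact huniq u u₀ hu hu₀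
  · rintro u ⟨hFu, hGu⟩
    constructor
    · rw [(hGu : G u = α * E)]
      exact sub_self _
    · intro x hx
      have hu0 : 0 < u := hupos u hGu
      have hx0 : 0 < x := lt_trans hu0 hx
      have hGx : α * E < G x := hGu ▸ hstrict u x hu0 hx
      have hFx : 0 < F x := lt_trans hFu (hmono (Set.mem_Ioi.mpr hu0) (Set.mem_Ioi.mpr hx0) hx)
      have : (∫ ω in {ω | v ω < x}, v ω ∂μ) / F x - α * E / F x = (G x - α * E) / F x := by
        rw [div_sub_div_same]
      rw [this]
      exact div_pos (sub_pos.mpr hGx) hFx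

theorem uncertain_timing_cutoff
    {Ω : Type*} [MeasurableSpace Ω] (μ : Measure Ω) [IsProbabilityMeasure μ]
    (v : Ω → ℝ) (hv : Integrable v μ) (hpos : ∀ ω, 0 ≤ v ω)
    (F : ℝ → ℝ) (hF : ∀ x, F x = (μ {ω | v ω ≤ x}).toReal)
    (hcont : Continuous F) (hmono : StrictMonoOn F (Set.Ioi 0))
    (α : ℝ) (hα : 0 < α) (hα1 : α < 1)
    (hmean : 0 < ∫ ω, v ω ∂μ) :
    (∃! u : ℝ, 0 < F u ∧
        ∫ ω in {ω | v ω < u}, v ω ∂μ = α * ∫ ω, v ω ∂μ)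
    ∧ ∀ u : ℝ,
        (0 < F u ∧ ∫ ω in {ω | v ω < u}, v ω ∂μ = α * ∫ ω, v ω ∂μ) →
        ((∫ ω in {ω | v ω < u}, v ω ∂μ) / F u - α * (∫ ω, v ω ∂μ) / F u = 0
          ∧ ∀ x > u,
            0 < (∫ ω in {ω | v ω < x}, v ω ∂μ) / F x - α * (∫ ω, v ω ∂μ) / F x) := by
  set w : Ω → ℝ := fun ω => max (hv.1.mk v ω) 0 with hwdef
  have hweq : v =ᵐ[μ] w := by
    filter_upwards [hv.1.ae_eq_mk] with ω h
    simp only [hwdef, ← h, max_eq_left (hpos ω)]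
  have hwmeas : Measurable w :=
    hv.1.stronglyMeasurable_mk.measurable.max measurable_const
  have hwint : Integrable w μ := hv.congr hweq
  have hwpos : ∀ ω, 0 ≤ w ω := fun ω => le_max_right _ _
  have hFw : ∀ x, F x = (μ {ω | w ω ≤ x}).toReal := by
    intro x
    rw [hF x]
    congr 1
    apply measure_congr
    rw [Filter.eventuallyEq_set]
    filter_upwards [hweq] with ω h
    simp [Set.mem_setOf_eq, h]
  have key1 : ∀ u : ℝ, (∫ ω in {ω | v ω < u}, v ω ∂μ) = ∫ ω in {ω | w ω < u}, w ω ∂μ := by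
    intro u
    have hset : {ω | v ω < u} =ᵐ[μ] {ω | w ω < u} := by
      rw [Filter.eventuallyEq_set]
      filter_upwards [hweq] with ω h
      simp [Set.mem_setOf_eq, h]
    rw [setIntegral_congr_set hset]
    exact integral_congr_ae (ae_restrict_of_ae hweq)
  have key2 : (∫ ω, v ω ∂μ) = ∫ ω, w ω ∂μ := integral_congr_ae hweq
  simp only [key1, key2] at hmean ⊢
  exact uncertain_timing_cutoff_aux μ w hwmeas hwint hwpos F hFw hcont hmono α hα hα1 hmean
end
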